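/- arXiv:0904.1167 — 7 statements merged into one kernel-verified Lean document; each statement's English description precedes it below -/
import Mathlib

section
/- For every q ≥ 0 the integral κ(q) := ∫_{S↓} (1 − Σ_{j≥1} s_j^{q+1}) ν(ds) is well defined and finite; indeed 0 ≤ 1 − Σ_{j≥1} s_j^{q+1} ≤ (q+1)(1 − s_1) for ν-almost every s. Moreover κ(0) = 0 and the function q ↦ κ(q) is nondecreasing and concave on [0, ∞). -/
open MeasureTheory Set

/-- On `[0,1]`, `x ^ p'` decreases as the exponent grows (for positive exponents). -/
lemma aux_rpow_anti {x p p' : ℝ} (hx : x ∈ Set.Icc (0:ℝ) 1) (hp : 0 < p) (hpp : p ≤ p') :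
    x ^ p' ≤ x ^ p := by
  rcases eq_or_lt_of_le hx.1 with h | h
  · rw [← h, Real.zero_rpow (by linarith), Real.zero_rpow (by linarith)]
  · exact Real.rpow_le_rpow_of_exponent_ge h hx.2 hpp

lemma aux_rpow_le_self {x p : ℝ} (hx : x ∈ Set.Icc (0:ℝ) 1) (hp : 1 ≤ p) : x ^ p ≤ x := by
  have := aux_rpow_anti hx one_pos hp
  rwa [Real.rpow_one] at this

/-- Convexity in the exponent, for bases in `[0,1]` and exponents `≥ 1`. -/
lemma aux_rpow_convex {x : ℝ} (hx : x ∈ Set.Icc (0:ℝ) 1) {a b θ₁ θ₂ : ℝ}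
    (ha : 1 ≤ a) (hb : 1 ≤ b) (hθ₁ : 0 ≤ θ₁) (hθ₂ : 0 ≤ θ₂) (hθ : θ₁ + θ₂ = 1) :
    x ^ (θ₁ * a + θ₂ * b) ≤ θ₁ * x ^ a + θ₂ * x ^ b := by
  rcases eq_or_lt_of_le hx.1 with h | h
  · have hab : 0 < θ₁ * a + θ₂ * b := by nlinarith
    rw [← h, Real.zero_rpow hab.ne', Real.zero_rpow (by linarith : (a:ℝ) ≠ 0),
      Real.zero_rpow (by linarith : (b:ℝ) ≠ 0)]
    simp
  · have key := convexOn_exp.2 (Set.mem_univ (Real.log x * a)) (Set.mem_univ (Real.log x * b))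
      hθ₁ hθ₂ hθ
    simp only [smul_eq_mul] at key
    rw [Real.rpow_def_of_pos h, Real.rpow_def_of_pos h, Real.rpow_def_of_pos h]
    calc Real.exp (Real.log x * (θ₁ * a + θ₂ * b))
        = Real.exp (θ₁ * (Real.log x * a) + θ₂ * (Real.log x * b)) := by ring_nf
      _ ≤ θ₁ * Real.exp (Real.log x * a) + θ₂ * Real.exp (Real.log x * b) := key

/-- Basic facts for a "good" ranked sequence. -/
lemma aux_good {s : ℕ → ℝ} (h1 : ∀ i, s i ∈ Set.Icc (0:ℝ) 1) (h3 : (∑' i, s i) = 1)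
    {q : ℝ} (hq : 0 ≤ q) :
    Summable (fun j => s j ^ (q + 1)) ∧ (∑' j, s j ^ (q + 1)) ≤ 1 ∧
      s 0 ^ (q + 1) ≤ ∑' j, s j ^ (q + 1) := by
  have hs : Summable s := by
    by_contra h
    rw [tsum_eq_zero_of_not_summable h] at h3
    norm_num at h3
  have hnn : ∀ j, (0:ℝ) ≤ s j ^ (q + 1) := fun j => Real.rpow_nonneg (h1 j).1 _
  have hle : ∀ j, s j ^ (q + 1) ≤ s j := fun j => aux_rpow_le_self (h1 j) (by linarith)
  have hsum : Summable (fun j => s j ^ (q + 1)) :=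
    Summable.of_nonneg_of_le hnn hle hs
  refine ⟨hsum, ?_, ?_⟩
  · calc (∑' j, s j ^ (q + 1)) ≤ ∑' j, s j := Summable.tsum_le_tsum hle hsum hs
      _ = 1 := h3
  · exact Summable.le_tsum hsum 0 (fun j _ => hnn j)

/-- The pointwise bounds for a good sequence. -/
lemma aux_bounds {s : ℕ → ℝ} (h1 : ∀ i, s i ∈ Set.Icc (0:ℝ) 1) (h3 : (∑' i, s i) = 1)
    {q : ℝ} (hq : 0 ≤ q) :
    0 ≤ 1 - ∑' j, (s j) ^ (q + 1) ∧
      1 - (∑' j, (s j) ^ (q + 1)) ≤ (q + 1) * (1 - s 0) := by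
  obtain ⟨hsum, hle1, hge⟩ := aux_good h1 h3 hq
  refine ⟨by linarith, ?_⟩
  have hbern : 1 + (q + 1) * (s 0 - 1) ≤ s 0 ^ (q + 1) := by
    have := one_add_mul_self_le_rpow_one_add (s := s 0 - 1) (by linarith [(h1 0).1])
      (p := q + 1) (by linarith)
    simpa using this
  nlinarith

/-- For a dislocation measure `ν` on ranked sequences (read on `ℕ → ℝ`),
carried by nonincreasing sequences in `[0,1]` with total sum `1`, and such that
`s ↦ 1 - s 0` is `ν`-integrable, the Laplace exponent
`κ(q) := ∫ (1 - ∑ⱼ sⱼ^(q+1)) dν` is well defined and finite for every `q ≥ 0`: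
indeed `0 ≤ 1 - ∑ⱼ sⱼ^(q+1) ≤ (q+1)(1 - s 0)` ν-a.e.  Moreover `κ 0 = 0` and
`κ` is nondecreasing and concave on `[0,∞)`. -/
theorem stmt0 (ν : Measure (ℕ → ℝ))
    (hae : ∀ᵐ s ∂ν, (∀ i, s i ∈ Set.Icc (0:ℝ) 1) ∧ Antitone s ∧ (∑' i, s i) = 1)
    (hint : Integrable (fun s : ℕ → ℝ => 1 - s 0) ν) :
    (∀ q : ℝ, 0 ≤ q →
      ∀ᵐ s ∂ν, 0 ≤ 1 - ∑' j, (s j) ^ (q + 1) ∧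
        1 - (∑' j, (s j) ^ (q + 1)) ≤ (q + 1) * (1 - s 0)) ∧
    (∀ q : ℝ, 0 ≤ q →
      Integrable (fun s : ℕ → ℝ => 1 - ∑' j, (s j) ^ (q + 1)) ν) ∧
    (∫ s, (1 - ∑' j, (s j) ^ ((0:ℝ) + 1)) ∂ν) = 0 ∧
    MonotoneOn (fun q : ℝ => ∫ s, (1 - ∑' j, (s j) ^ (q + 1)) ∂ν) (Set.Ici 0) ∧
    ConcaveOn ℝ (Set.Ici 0) (fun q : ℝ => ∫ s, (1 - ∑' j, (s j) ^ (q + 1)) ∂ν) := by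
  -- a.e. bounds
  have hb : ∀ q : ℝ, 0 ≤ q →
      ∀ᵐ s ∂ν, 0 ≤ 1 - ∑' j, (s j) ^ (q + 1) ∧
        1 - (∑' j, (s j) ^ (q + 1)) ≤ (q + 1) * (1 - s 0) := by
    intro q hq
    filter_upwards [hae] with s hs
    exact aux_bounds hs.1 hs.2.2 hq
  -- measurability
  have hmeas : ∀ q : ℝ, 0 ≤ q →
      AEStronglyMeasurable (fun s : ℕ → ℝ => 1 - ∑' j, (s j) ^ (q + 1)) ν := by
    intro q hq
    refine ⟨fun s => 1 - (∑' j, ENNReal.ofReal ((s j) ^ (q + 1))).toReal, ?_, ?_⟩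
    · apply Measurable.stronglyMeasurable
      apply Measurable.const_sub
      apply ENNReal.measurable_toReal.comp
      exact Measurable.ennreal_tsum fun j =>
        (((Real.continuous_rpow_const (by linarith : (0:ℝ) ≤ q + 1)).measurable).comp
          (measurable_pi_apply j)).ennreal_ofReal
    · filter_upwards [hae] with s hs
      obtain ⟨hsum, _, _⟩ := aux_good hs.1 hs.2.2 hq
      have hnn : ∀ j, (0:ℝ) ≤ s j ^ (q + 1) := fun j => Real.rpow_nonneg (hs.1 j).1 _
      rw [← ENNReal.ofReal_tsum_of_nonneg hnn hsum,
        ENNReal.toReal_ofReal (tsum_nonneg hnn)]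
  -- integrability
  have hInt : ∀ q : ℝ, 0 ≤ q →
      Integrable (fun s : ℕ → ℝ => 1 - ∑' j, (s j) ^ (q + 1)) ν := by
    intro q hq
    refine Integrable.mono' (hint.const_mul (q + 1)) (hmeas q hq) ?_
    filter_upwards [hb q hq] with s hs
    rw [Real.norm_of_nonneg hs.1]
    exact hs.2
  refine ⟨hb, hInt, ?_, ?_, ?_⟩
  -- κ(0) = 0
  · apply integral_eq_zero_of_ae
    filter_upwards [hae] with s hs
    simp only [zero_add, Real.rpow_one, Pi.zero_apply]
    rw [hs.2.2]
    ring
  -- monotone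
  · intro p hp q hq hpq
    have hp' := mem_Ici.mp hp
    have hq' := mem_Ici.mp hq
    apply integral_mono_ae (hInt p hp) (hInt q hq)
    filter_upwards [hae] with s hs
    obtain ⟨hsp, _, _⟩ := aux_good hs.1 hs.2.2 hp'
    obtain ⟨hsq, _, _⟩ := aux_good hs.1 hs.2.2 hq'
    have : (∑' j, s j ^ (q + 1)) ≤ ∑' j, s j ^ (p + 1) := by
      refine Summable.tsum_le_tsum (fun j => ?_) hsq hsp
      exact aux_rpow_anti (hs.1 j) (by linarith) (by linarith)
    linarith
  -- concave
  · refine ⟨convex_Ici 0, fun x hx y hy θ₁ θ₂ hθ₁ hθ₂ hθ => ?_⟩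
    simp only [smul_eq_mul]
    have hxy : (0:ℝ) ≤ θ₁ * x + θ₂ * y := by
      have := mem_Ici.mp hx; have := mem_Ici.mp hy; positivity
    rw [← integral_const_mul, ← integral_const_mul,
      ← integral_add ((hInt x hx).const_mul θ₁) ((hInt y hy).const_mul θ₂)]
    apply integral_mono_ae
      (((hInt x hx).const_mul θ₁).add ((hInt y hy).const_mul θ₂)) (hInt _ hxy)
    filter_upwards [hae] with s hs
    obtain ⟨hsx, _, _⟩ := aux_good hs.1 hs.2.2 (mem_Ici.mp hx)
    obtain ⟨hsy, _, _⟩ := aux_good hs.1 hs.2.2 (mem_Ici.mp hy)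
    obtain ⟨hsxy, _, _⟩ := aux_good hs.1 hs.2.2 hxy
    have hterm : ∀ j, s j ^ ((θ₁ * x + θ₂ * y) + 1) ≤
        θ₁ * s j ^ (x + 1) + θ₂ * s j ^ (y + 1) := by
      intro j
      have : (θ₁ * x + θ₂ * y) + 1 = θ₁ * (x + 1) + θ₂ * (y + 1) := by
        have : θ₁ + θ₂ = 1 := hθ; nlinarith
      rw [this]
      exact aux_rpow_convex (hs.1 j) (by linarith [mem_Ici.mp hx])
        (by linarith [mem_Ici.mp hy]) hθ₁ hθ₂ hθ
    have hle : (∑' j, s j ^ ((θ₁ * x + θ₂ * y) + 1)) ≤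
        θ₁ * (∑' j, s j ^ (x + 1)) + θ₂ * (∑' j, s j ^ (y + 1)) := by
      calc (∑' j, s j ^ ((θ₁ * x + θ₂ * y) + 1))
          ≤ ∑' j, (θ₁ * s j ^ (x + 1) + θ₂ * s j ^ (y + 1)) :=
            Summable.tsum_le_tsum hterm hsxy ((hsx.mul_left θ₁).add (hsy.mul_left θ₂))
        _ = θ₁ * (∑' j, s j ^ (x + 1)) + θ₂ * (∑' j, s j ^ (y + 1)) := by
            rw [Summable.tsum_add (hsx.mul_left θ₁) (hsy.mul_left θ₂), tsum_mul_left, tsum_mul_left]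
    have h1 : θ₁ + θ₂ = 1 := hθ
    simp only [Pi.add_apply]
    linarith
end

section
/- Define the measure L on (0, ∞) by L(A) := ∫_{S↓} Σ_{j≥1, s_j>0} s_j · 1_A(−log s_j) ν(ds) (i.e. L(dx) = e^{−x} Σ_j ν(−log s_j ∈ dx)). Then L satisfies ∫_{(0,∞)} (1 ∧ x) L(dx) < ∞, and for every q ≥ 0, ∫_{S↓} (1 − Σ_{j≥1} s_j^{q+1}) ν(ds) = ∫_{(0,∞)} (1 − e^{−qx}) L(dx); that is, κ is the Laplace exponent of a subordinator with Lévy measure L. -/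
open MeasureTheory Set Classical ENNReal

lemma key_lintegral (ν : Measure (ℕ → ℝ)) (L : Measure ℝ)
    (hL : ∀ A : Set ℝ, MeasurableSet A →
      L A = ∫⁻ s, (∑' j : ℕ,
        if 0 < s j ∧ (-Real.log (s j)) ∈ A then ENNReal.ofReal (s j) else 0) ∂ν)
    (f : ℝ → ℝ≥0∞) (hf : Measurable f) :
    ∫⁻ x, f x ∂L
      = ∫⁻ s, ∑' j : ℕ,
          (if 0 < s j then ENNReal.ofReal (s j) * f (-Real.log (s j)) else 0) ∂ν := by
  have hT : ∀ j : ℕ, Measurable fun s : ℕ → ℝ => -Real.log (s j) := fun j =>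
    (Real.measurable_log.comp (measurable_pi_apply j)).neg
  set d : ℕ → (ℕ → ℝ) → ℝ≥0∞ := fun j s => if 0 < s j then ENNReal.ofReal (s j) else 0 with hd_def
  have hd : ∀ j, Measurable (d j) := fun j =>
    Measurable.ite (measurableSet_lt measurable_const (measurable_pi_apply j))
      (measurable_pi_apply j).ennreal_ofReal measurable_const
  set μ : ℕ → Measure ℝ := fun j => (ν.withDensity (d j)).map (fun s => -Real.log (s j)) with hμ_def
  have hμ : ∀ (j : ℕ) (A : Set ℝ), MeasurableSet A →
      μ j A = ∫⁻ s, (if 0 < s j ∧ (-Real.log (s j)) ∈ A then ENNReal.ofReal (s j) else 0) ∂ν := by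
    intro j A hA
    rw [hμ_def]
    rw [Measure.map_apply (hT j) hA, withDensity_apply _ ((hT j) hA),
      ← lintegral_indicator ((hT j) hA)]
    congr 1
    funext s
    by_cases h : (-Real.log (s j)) ∈ A <;> by_cases h2 : 0 < s j <;>
      simp [Set.indicator_apply, Set.mem_preimage, hd_def, h, h2]
  have hmeasA : ∀ (j : ℕ) (A : Set ℝ), MeasurableSet A →
      Measurable fun s : ℕ → ℝ =>
        (if 0 < s j ∧ (-Real.log (s j)) ∈ A then ENNReal.ofReal (s j) else 0) := by
    intro j A hA
    exact Measurable.ite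
      ((measurableSet_lt measurable_const (measurable_pi_apply j)).inter ((hT j) hA))
      (measurable_pi_apply j).ennreal_ofReal measurable_const
  have hLsum : L = Measure.sum μ := by
    ext A hA
    rw [hL A hA, Measure.sum_apply _ hA,
      lintegral_tsum (fun j => (hmeasA j A hA).aemeasurable)]
    exact tsum_congr fun j => (hμ j A hA).symm
  calc ∫⁻ x, f x ∂L = ∑' j, ∫⁻ x, f x ∂(μ j) := by rw [hLsum, lintegral_sum_measure]
    _ = ∑' j, ∫⁻ s, d j s * f (-Real.log (s j)) ∂ν := by
        refine tsum_congr fun j => ?_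
        rw [hμ_def]
        rw [lintegral_map hf (hT j)]
        exact lintegral_withDensity_eq_lintegral_mul ν (hd j) (hf.comp (hT j))
    _ = ∫⁻ s, ∑' j, d j s * f (-Real.log (s j)) ∂ν := by
        refine (lintegral_tsum fun j => ((hd j).mul (hf.comp (hT j))).aemeasurable).symm
    _ = _ := by
        refine lintegral_congr fun s => tsum_congr fun j => ?_
        rw [hd_def]
        by_cases h : 0 < s j <;> simp [h]

lemma pointwise2 (q : ℝ) (hq : 0 ≤ q) (s : ℕ → ℝ)
    (h1 : ∀ i, s i ∈ Set.Icc (0:ℝ) 1) (h3 : (∑' i, s i) = 1) :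
    ENNReal.ofReal (1 - ∑' j, (s j) ^ (q+1))
      = ∑' j : ℕ, (if 0 < s j then ENNReal.ofReal (s j) *
          ((Set.Ioi (0:ℝ)).indicator
            (fun x => ENNReal.ofReal (1 - Real.exp (-q * x))) (-Real.log (s j))) else 0) := by
  have hsum : Summable s := by
    by_contra h
    rw [tsum_eq_zero_of_not_summable h] at h3
    norm_num at h3
  have hle : ∀ j, s j ^ (q+1) ≤ s j := by
    intro j
    rcases eq_or_lt_of_le (h1 j).1 with h | h
    · rw [← h, Real.zero_rpow (by linarith : q + 1 ≠ 0)]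
    · calc s j ^ (q+1) ≤ s j ^ (1:ℝ) :=
            Real.rpow_le_rpow_of_exponent_ge h (h1 j).2 (by linarith)
        _ = s j := Real.rpow_one _
  have hnn : ∀ j, (0:ℝ) ≤ s j ^ (q+1) := fun j => Real.rpow_nonneg (h1 j).1 _
  have hsum2 : Summable (fun j => s j ^ (q+1)) := Summable.of_nonneg_of_le hnn hle hsum
  have hdiff : 1 - ∑' j, s j ^ (q+1) = ∑' j, (s j - s j ^ (q+1)) := by
    rw [Summable.tsum_sub hsum hsum2, h3]
  rw [hdiff, ENNReal.ofReal_tsum_of_nonneg (fun j => sub_nonneg.2 (hle j)) (hsum.sub hsum2)]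
  refine tsum_congr fun j => ?_
  rcases eq_or_lt_of_le (h1 j).1 with h | h
  · rw [if_neg (by rw [← h]; exact lt_irrefl 0), ← h,
      Real.zero_rpow (by linarith : q + 1 ≠ 0), sub_zero, ENNReal.ofReal_zero]
  · rw [if_pos h]
    rcases eq_or_lt_of_le (h1 j).2 with h2 | h2
    · rw [h2, Real.log_one, neg_zero, Set.indicator_of_notMem (by simp), mul_zero,
        Real.one_rpow, sub_self, ENNReal.ofReal_zero]
    · have hlog : 0 < -Real.log (s j) := by
        have := Real.log_neg h h2; linarith
      rw [Set.indicator_of_mem (Set.mem_Ioi.2 hlog), ← ENNReal.ofReal_mul h.le]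
      congr 1
      have hexp : Real.exp (-q * -Real.log (s j)) = s j ^ q := by
        rw [neg_mul_neg, mul_comm, ← Real.rpow_def_of_pos h]
      have hsplit : s j ^ (q+1) = s j * s j ^ q := by
        rw [Real.rpow_add h, Real.rpow_one]; ring
      rw [hexp, hsplit]; ring

lemma pointwise1 (s : ℕ → ℝ)
    (h1 : ∀ i, s i ∈ Set.Icc (0:ℝ) 1) (h3 : (∑' i, s i) = 1) :
    (∑' j : ℕ, (if 0 < s j then ENNReal.ofReal (s j) *
        ((Set.Ioi (0:ℝ)).indicator (fun x => ENNReal.ofReal (min 1 x)) (-Real.log (s j)))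
      else 0)) ≤ ENNReal.ofReal (2 * (1 - s 0)) := by
  set t : ℕ → ℝ≥0∞ := fun j => (if 0 < s j then ENNReal.ofReal (s j) *
      ((Set.Ioi (0:ℝ)).indicator (fun x => ENNReal.ofReal (min 1 x)) (-Real.log (s j)))
    else 0) with ht_def
  have hsum : Summable s := by
    by_contra h
    rw [tsum_eq_zero_of_not_summable h] at h3
    norm_num at h3
  have hf1 : ∀ y : ℝ, (Set.Ioi (0:ℝ)).indicator (fun x => ENNReal.ofReal (min 1 x)) y ≤ 1 := by
    intro y
    by_cases h : y ∈ Set.Ioi (0:ℝ)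
    · rw [Set.indicator_of_mem h]
      calc ENNReal.ofReal (min 1 y) ≤ ENNReal.ofReal 1 :=
            ENNReal.ofReal_le_ofReal (min_le_left _ _)
        _ = 1 := ENNReal.ofReal_one
    · rw [Set.indicator_of_notMem h]; exact zero_le
  have htle : ∀ j, t j ≤ ENNReal.ofReal (s j) := by
    intro j
    rw [ht_def]
    dsimp only
    split_ifs with h
    · calc ENNReal.ofReal (s j) * _ ≤ ENNReal.ofReal (s j) * 1 := mul_le_mul_right (hf1 _) _
        _ = ENNReal.ofReal (s j) := mul_one _
    · exact zero_le
  have htail : ∑' j : ℕ, ENNReal.ofReal (s (j+1)) = ENNReal.ofReal (1 - s 0) := by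
    rw [← ENNReal.ofReal_tsum_of_nonneg (fun j => (h1 (j+1)).1) ((summable_nat_add_iff 1).2 hsum)]
    congr 1
    have h0 := Summable.tsum_eq_zero_add hsum
    linarith
  have ht0 : t 0 ≤ ENNReal.ofReal (1 - s 0) := by
    rw [ht_def]
    dsimp only
    split_ifs with h
    · by_cases h2 : (-Real.log (s 0)) ∈ Set.Ioi (0:ℝ)
      · rw [Set.indicator_of_mem h2, ← ENNReal.ofReal_mul h.le]
        apply ENNReal.ofReal_le_ofReal
        have hlog : Real.log (s 0)⁻¹ ≤ (s 0)⁻¹ - 1 :=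
          Real.log_le_sub_one_of_pos (by positivity)
        rw [Real.log_inv] at hlog
        have hlnn : (0:ℝ) ≤ -Real.log (s 0) := le_of_lt (Set.mem_Ioi.1 h2)
        have hinv : s 0 * (s 0)⁻¹ = 1 := mul_inv_cancel₀ (ne_of_gt h)
        calc s 0 * min 1 (-Real.log (s 0)) ≤ s 0 * (-Real.log (s 0)) := by
              nlinarith [min_le_right (1:ℝ) (-Real.log (s 0))]
          _ ≤ 1 - s 0 := by nlinarith
      · rw [Set.indicator_of_notMem h2, mul_zero]
        exact zero_le
    · exact zero_le
  calc ∑' j, t j = t 0 + ∑' j, t (j+1) := tsum_eq_zero_add' ENNReal.summable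
    _ ≤ ENNReal.ofReal (1 - s 0) + ENNReal.ofReal (1 - s 0) := by
        refine add_le_add ht0 ?_
        exact le_trans (ENNReal.tsum_le_tsum fun j => htle (j+1)) (le_of_eq htail)
    _ = ENNReal.ofReal (2 * (1 - s 0)) := by
        rw [← ENNReal.ofReal_add (by linarith [(h1 0).2]) (by linarith [(h1 0).2])]
        congr 1; ring

open MeasureTheory Set Classical in

/-- The measure `L` on `(0,∞)` defined by
`L(A) = ∫ ∑_{j, sⱼ>0} sⱼ · 1_A(-log sⱼ) ν(ds)` satisfies `∫ (1 ∧ x) L(dx) < ∞`,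
and for every `q ≥ 0`, `∫ (1 - ∑ⱼ sⱼ^(q+1)) ν(ds) = ∫ (1 - e^{-qx}) L(dx)`;
that is, `κ` is the Laplace exponent of a subordinator with Lévy measure `L`. -/
theorem stmt1 (ν : Measure (ℕ → ℝ))
    (hae : ∀ᵐ s ∂ν, (∀ i, s i ∈ Set.Icc (0:ℝ) 1) ∧ Antitone s ∧ (∑' i, s i) = 1)
    (hint : Integrable (fun s : ℕ → ℝ => 1 - s 0) ν)
    (L : Measure ℝ)
    (hL : ∀ A : Set ℝ, MeasurableSet A →
      L A = ∫⁻ s, (∑' j : ℕ,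
        if 0 < s j ∧ (-Real.log (s j)) ∈ A then ENNReal.ofReal (s j) else 0) ∂ν) :
    (∫⁻ x in Set.Ioi (0:ℝ), ENNReal.ofReal (min 1 x) ∂L) < ⊤ ∧
    (∀ q : ℝ, 0 ≤ q →
      (∫⁻ s, ENNReal.ofReal (1 - ∑' j, (s j) ^ (q + 1)) ∂ν)
        = ∫⁻ x in Set.Ioi (0:ℝ), ENNReal.ofReal (1 - Real.exp (-q * x)) ∂L) := by
  constructor
  · have hm : Measurable fun x : ℝ => ENNReal.ofReal (min 1 x) :=
      (measurable_const.min measurable_id).ennreal_ofReal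
    rw [← lintegral_indicator measurableSet_Ioi,
      key_lintegral ν L hL _ (hm.indicator measurableSet_Ioi)]
    have hb : ∫⁻ s, ∑' j : ℕ,
        (if 0 < s j then ENNReal.ofReal (s j) *
          ((Set.Ioi (0:ℝ)).indicator (fun x => ENNReal.ofReal (min 1 x)) (-Real.log (s j)))
        else 0) ∂ν ≤ ∫⁻ s, ENNReal.ofReal (2 * (1 - s 0)) ∂ν := by
      refine lintegral_mono_ae ?_
      filter_upwards [hae] with s hs
      exact pointwise1 s hs.1 hs.2.2
    refine lt_of_le_of_lt hb ?_
    have hb2 : ∫⁻ s, ENNReal.ofReal (2 * (1 - s 0)) ∂ν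
        ≤ ∫⁻ s, 2 * (‖1 - s 0‖₊ : ℝ≥0∞) ∂ν := by
      refine lintegral_mono fun s => ?_
      rw [ENNReal.ofReal_mul (by norm_num : (0:ℝ) ≤ 2), ENNReal.ofReal_ofNat]
      exact mul_le_mul_right (Real.ofReal_le_enorm _) _
    refine lt_of_le_of_lt hb2 ?_
    rw [lintegral_const_mul' 2 _ (by norm_num)]
    exact ENNReal.mul_lt_top (by norm_num) hint.2
  · intro q hq
    have hm : Measurable fun x : ℝ => ENNReal.ofReal (1 - Real.exp (-q * x)) :=
      (measurable_const.sub (Real.measurable_exp.comp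
        (measurable_const.mul measurable_id))).ennreal_ofReal
    rw [← lintegral_indicator measurableSet_Ioi,
      key_lintegral ν L hL _ (hm.indicator measurableSet_Ioi)]
    refine lintegral_congr_ae ?_
    filter_upwards [hae] with s hs
    exact pointwise2 q hq s hs.1 hs.2.2
end

section
/- Suppose p̄ ∈ (p̲, ∞) satisfies κ(p̄) = (p̄+1)κ'(p̄). Then κ(p) − (p+1)κ'(p) < 0 for every p ∈ (p̲, p̄), and κ(p) − (p+1)κ'(p) > 0 for every p ∈ (p̄, ∞). In particular, p̄ is the unique solution of the equation κ(q) = (q+1)κ'(q) on (p̲, ∞). -/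
open Set

/-- Let `κ` be twice differentiable on `(p̲, ∞)` (where
`-1 ≤ p̲ < 0`) with `κ'' < 0` there, and suppose `p̄ ∈ (p̲, ∞)` satisfies
`κ(p̄) = (p̄+1)κ'(p̄)`.  Then `κ(p) - (p+1)κ'(p) < 0` for every `p ∈ (p̲, p̄)`
and `κ(p) - (p+1)κ'(p) > 0` for every `p ∈ (p̄, ∞)`; in particular `p̄` is the
unique solution of `κ(q) = (q+1)κ'(q)` on `(p̲, ∞)`. -/
theorem stmt4 (pl : ℝ) (hpl₁ : -1 ≤ pl) (hpl₂ : pl < 0)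
    (κ κ' κ'' : ℝ → ℝ)
    (hderiv : ∀ p ∈ Set.Ioi pl, HasDerivAt κ (κ' p) p)
    (hderiv2 : ∀ p ∈ Set.Ioi pl, HasDerivAt κ' (κ'' p) p)
    (hneg : ∀ p ∈ Set.Ioi pl, κ'' p < 0)
    (pbar : ℝ) (hpbar : pbar ∈ Set.Ioi pl)
    (heq : κ pbar = (pbar + 1) * κ' pbar) :
    (∀ p : ℝ, pl < p → p < pbar → κ p - (p + 1) * κ' p < 0) ∧
    (∀ p : ℝ, pbar < p → 0 < κ p - (p + 1) * κ' p) ∧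
    (∀ q ∈ Set.Ioi pl, κ q = (q + 1) * κ' q → q = pbar) := by
  set g : ℝ → ℝ := fun p => κ p - (p + 1) * κ' p with hg
  have hgd : ∀ p ∈ Set.Ioi pl, HasDerivAt g (-((p + 1) * κ'' p)) p := by
    intro p hp
    have h1 : HasDerivAt (fun x : ℝ => (x + 1) * κ' x)
        (1 * κ' p + (p + 1) * κ'' p) p :=
      ((hasDerivAt_id p).add_const 1).mul (hderiv2 p hp)
    have := (hderiv p hp).sub h1
    have e : -((p + 1) * κ'' p) = κ' p - (1 * κ' p + (p + 1) * κ'' p) := by ring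
    rw [e]; exact this
  have hmono : StrictMonoOn g (Set.Ioi pl) := by
    apply strictMonoOn_of_hasDerivWithinAt_pos (convex_Ioi pl)
    · intro p hp
      exact ((hgd p hp).continuousAt).continuousWithinAt
    · intro p hp
      rw [interior_Ioi] at hp
      exact ((hgd p hp).hasDerivWithinAt)
    · intro p hp
      rw [interior_Ioi] at hp
      have hp1 : 0 < p + 1 := by
        have := hp.out
        linarith [hpl₁]
      have := hneg p hp
      nlinarith
  have hg0 : g pbar = 0 := by simp [hg, heq]
  refine ⟨?_, ?_, ?_⟩
  · intro p hp1 hp2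
    have := hmono (Set.mem_Ioi.mpr hp1) hpbar hp2
    have h0 := hg0
    simp only [hg] at this h0
    linarith
  · intro p hp
    have hpI : p ∈ Set.Ioi pl := lt_trans hpbar.out hp
    have := hmono hpbar hpI hp
    have h0 := hg0
    simp only [hg] at this h0
    linarith
  · intro q hq heq'
    by_contra hne
    rcases lt_or_gt_of_ne hne with h | h
    · have := hmono hq hpbar h
      rw [hg0] at this
      simp only [hg] at this
      linarith
    · have := hmono hpbar hq h
      rw [hg0] at this
      simp only [hg] at this
      linarith
end

section
/- Suppose p̄ ∈ (p̲, ∞) satisfies κ(p̄) = (p̄+1)κ'(p̄). For p ∈ (p̲, ∞) and α ≥ 0 set d(p, α) := (1+α)κ(p) − κ((1+α)(p+1) − 1) (note that (1+α)(p+1) − 1 ≥ p > p̲, so this is well defined). Then for every p ∈ (p̲, ∞) there exists α_0 = α_0(p) > 0 such that for all α ∈ (0, α_0): d(p, α) < 0 if p < p̄, and d(p, α) > 0 if p ≥ p̄. -/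
open Set

/-- Let `κ` be twice continuously differentiable on `(p̲, ∞)`
(where `-1 ≤ p̲ < 0`) with `κ'' < 0` there, and let `p̄ ∈ (p̲, ∞)` satisfy
`κ(p̄) = (p̄+1)κ'(p̄)`.  For `p ∈ (p̲, ∞)` and `α ≥ 0` set
`d(p, α) := (1+α)κ(p) - κ((1+α)(p+1) - 1)` (well defined since
`(1+α)(p+1) - 1 ≥ p > p̲`).  Then for every `p ∈ (p̲, ∞)` there exists
`α₀ > 0` such that for all `α ∈ (0, α₀)`: `d(p, α) < 0` if `p < p̄`, and
`d(p, α) > 0` if `p ≥ p̄`. -/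
theorem stmt5 (pl : ℝ) (hpl₁ : -1 ≤ pl) (hpl₂ : pl < 0)
    (κ κ' κ'' : ℝ → ℝ)
    (hderiv : ∀ p ∈ Set.Ioi pl, HasDerivAt κ (κ' p) p)
    (hderiv2 : ∀ p ∈ Set.Ioi pl, HasDerivAt κ' (κ'' p) p)
    (hcont : ContinuousOn κ'' (Set.Ioi pl))
    (hneg : ∀ p ∈ Set.Ioi pl, κ'' p < 0)
    (pbar : ℝ) (hpbar : pbar ∈ Set.Ioi pl)
    (heq : κ pbar = (pbar + 1) * κ' pbar) :
    ∀ p ∈ Set.Ioi pl, ∃ α₀ > (0:ℝ), ∀ α : ℝ, 0 < α → α < α₀ →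
      ((p < pbar → (1 + α) * κ p - κ ((1 + α) * (p + 1) - 1) < 0) ∧
       (pbar ≤ p → 0 < (1 + α) * κ p - κ ((1 + α) * (p + 1) - 1))) := by
  intro p hp
  have hpgt : pl < p := hp
  have hp1 : (0:ℝ) < p + 1 := by linarith
  -- the auxiliary function h
  set h : ℝ → ℝ := fun x => κ x - (x + 1) * κ' x with hh
  have hhd : ∀ x ∈ Ioi pl, HasDerivAt h (-(x + 1) * κ'' x) x := by
    intro x hx
    have h1 := hderiv x hx
    have h2 := hderiv2 x hx
    have h3 : HasDerivAt (fun y => (y + 1) * κ' y) (1 * κ' x + (x + 1) * κ'' x) x :=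
      (((hasDerivAt_id x).add_const 1)).mul h2
    have h4 := h1.sub h3
    refine h4.congr_deriv ?_
    ring
  have hmono : StrictMonoOn h (Ioi pl) := by
    apply strictMonoOn_of_deriv_pos (convex_Ioi pl)
    · exact fun x hx => ((hhd x hx).continuousAt).continuousWithinAt
    · intro x hx
      rw [interior_Ioi] at hx
      rw [(hhd x hx).deriv]
      have hx1 : (0:ℝ) < x + 1 := by
        have : pl < x := hx
        linarith
      nlinarith [hneg x hx]
  have hanti : StrictAntiOn κ' (Ioi pl) := by
    apply strictAntiOn_of_deriv_neg (convex_Ioi pl)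
    · exact fun x hx => ((hderiv2 x hx).continuousAt).continuousWithinAt
    · intro x hx
      rw [interior_Ioi] at hx
      rw [(hderiv2 x hx).deriv]
      exact hneg x hx
  have hhbar : h pbar = 0 := by simp [hh, heq]
  -- the functions q and g
  set q : ℝ → ℝ := fun α => (1 + α) * (p + 1) - 1 with hqdef
  set g : ℝ → ℝ := fun α => (1 + α) * κ p - κ (q α) with hgdef
  have hq0 : q 0 = p := by simp [hqdef]
  have hqmem : ∀ α : ℝ, 0 ≤ α → q α ∈ Ioi pl := by
    intro α hα
    simp only [hqdef, mem_Ioi]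
    nlinarith
  have hqgt : ∀ α : ℝ, 0 < α → p < q α := by
    intro α hα
    simp only [hqdef]
    nlinarith
  have hgd : ∀ α : ℝ, 0 ≤ α → HasDerivAt g (κ p - (p + 1) * κ' (q α)) α := by
    intro α hα
    have hqd : HasDerivAt q (p + 1) α := by
      have : HasDerivAt (fun x : ℝ => (1 + x) * (p + 1) - 1) (1 * (p + 1)) α :=
        (((hasDerivAt_id α).const_add 1).mul_const (p + 1)).sub_const 1
      simpa [hqdef] using this
    have hκ := (hderiv (q α) (hqmem α hα)).comp α hqd
    have h1 : HasDerivAt (fun x : ℝ => (1 + x) * κ p) (1 * κ p) α :=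
      ((hasDerivAt_id α).const_add 1).mul_const (κ p)
    have h2 := h1.sub hκ
    refine h2.congr_deriv ?_
    ring
  have hg0 : g 0 = 0 := by simp [hgdef, hq0]
  rcases lt_or_ge p pbar with hlt | hge
  · -- case p < pbar : derivative negative near 0
    have hhp : h p < 0 := by
      have := hmono hp hpbar hlt
      linarith
    have hcq : ContinuousAt q 0 := by
      apply Continuous.continuousAt
      simp only [hqdef]
      continuity
    have hcκ' : ContinuousAt κ' (q 0) :=
      (hderiv2 (q 0) (by rw [hq0]; exact hp)).continuousAt
    have hcont' : ContinuousAt (fun α => κ p - (p + 1) * κ' (q α)) 0 :=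
      continuousAt_const.sub (continuousAt_const.mul (hcκ'.comp hcq))
    have hval : κ p - (p + 1) * κ' (q 0) < 0 := by
      rw [hq0]
      simpa [hh] using hhp
    have hev : ∀ᶠ x in nhds (0:ℝ), κ p - (p + 1) * κ' (q x) < 0 :=
      hcont'.eventually_lt continuousAt_const hval
    obtain ⟨δ, hδpos, hδ⟩ := Metric.eventually_nhds_iff.mp hev
    refine ⟨δ, hδpos, ?_⟩
    intro α hα0 hαδ
    constructor
    · intro _
      have hantig : StrictAntiOn g (Icc 0 δ) := by
        apply strictAntiOn_of_deriv_neg (convex_Icc 0 δ)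
        · intro x hx
          exact ((hgd x hx.1).continuousAt).continuousWithinAt
        · intro x hx
          rw [interior_Icc] at hx
          rw [(hgd x hx.1.le).deriv]
          apply hδ
          rw [Real.dist_eq, sub_zero]
          rw [abs_of_pos hx.1]
          · linarith [hx.2]
      have := hantig (by constructor <;> linarith) ⟨hα0.le, hαδ.le⟩ hα0
      rw [hg0] at this
      simpa [hgdef, hqdef] using this
    · intro hge'
      exact absurd hlt (not_lt.mpr hge')
  · -- case pbar ≤ p : derivative positive for α > 0
    have hhp : 0 ≤ h p := by
      rcases eq_or_lt_of_le hge with heq' | hlt'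
      · rw [← heq']; exact le_of_eq hhbar.symm
      · have := hmono hpbar hp hlt'
        linarith
    refine ⟨1, one_pos, ?_⟩
    intro α hα0 hα1
    constructor
    · intro hlt'
      exact absurd hlt' (not_lt.mpr hge)
    · intro _
      have hmonog : StrictMonoOn g (Icc 0 α) := by
        apply strictMonoOn_of_deriv_pos (convex_Icc 0 α)
        · intro x hx
          exact ((hgd x hx.1).continuousAt).continuousWithinAt
        · intro x hx
          rw [interior_Icc] at hx
          rw [(hgd x hx.1.le).deriv]
          have hκ'lt : κ' (q x) < κ' p := hanti hp (hqmem x hx.1.le) (hqgt x hx.1)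
          have : κ p - (p + 1) * κ' p ≥ 0 := hhp
          nlinarith
      have := hmonog (by constructor <;> linarith) ⟨hα0.le, le_refl α⟩ hα0
      rw [hg0] at this
      simpa [hgdef, hqdef] using this
end

section
/- If W is moreover continuous on [0, ∞), then for every q ∈ ℝ the series Σ_{k≥0} q^k W^{*(k+1)} converges uniformly on compact subsets of [0, ∞), and the function x ↦ W^{(q)}(x) is continuous on [0, ∞). -/
open Set Filter

/-- Convolution powers of a function `W` on `[0,∞)`:
`convPow W k = W^{*(k+1)}`, i.e. `convPow W 0 = W^{*1} = W` and
`W^{*(k+2)}(x) = ∫₀ˣ W^{*(k+1)}(y) W(x-y) dy`. -/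
noncomputable def convPow (W : ℝ → ℝ) : ℕ → ℝ → ℝ
  | 0 => W
  | (k + 1) => fun x => ∫ y in (0:ℝ)..x, convPow W k y * W (x - y)

/-- If `V` is continuous, all convolution powers are continuous. -/
lemma convPow_continuous {V : ℝ → ℝ} (hV : Continuous V) (k : ℕ) :
    Continuous (convPow V k) := by
  induction k with
  | zero => exact hV
  | succ k ih =>
    show Continuous fun x => ∫ y in (0:ℝ)..x, convPow V k y * V (x - y)
    exact intervalIntegral.continuous_parametric_intervalIntegral_of_continuous
      (f := fun x y => convPow V k y * V (x - y))
      (by fun_prop) continuous_id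

/-- On `[0,∞)`, convolutions of `W` agree with those of the continuous
modification `y ↦ W (max y 0)`. -/
lemma convPow_congr (W : ℝ → ℝ) (k : ℕ) :
    ∀ x ∈ Set.Ici (0:ℝ), convPow W k x = convPow (fun y => W (max y 0)) k x := by
  induction k with
  | zero => intro x hx; simp [convPow, max_eq_left (mem_Ici.mp hx)]
  | succ k ih =>
    intro x hx
    have hx0 : (0:ℝ) ≤ x := hx
    show (∫ y in (0:ℝ)..x, convPow W k y * W (x - y)) = _
    refine intervalIntegral.integral_congr fun y hy => ?_
    rw [Set.uIcc_of_le hx0] at hy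
    have hy0 : (0:ℝ) ≤ y := hy.1
    have hxy : (0:ℝ) ≤ x - y := by linarith [hy.2]
    dsimp only
    rw [ih y hy0, max_eq_left hxy]

/-- Nonnegativity and factorial bound for convolution powers of a continuous,
nonnegative, nondecreasing function. -/
lemma convPow_bound {V : ℝ → ℝ} (hV : Continuous V)
    (hVnn : ∀ x ∈ Set.Ici (0:ℝ), 0 ≤ V x)
    (hVmono : MonotoneOn V (Set.Ici (0:ℝ))) (b : ℝ) (hb : 0 ≤ b) (k : ℕ) :
    ∀ x, 0 ≤ x → x ≤ b →
      0 ≤ convPow V k x ∧ convPow V k x ≤ V b ^ (k + 1) * x ^ k / k.factorial := by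
  induction k with
  | zero =>
    intro x hx0 hxb
    refine ⟨hVnn x hx0, ?_⟩
    simpa [convPow] using hVmono hx0 hb hxb
  | succ k ih =>
    intro x hx0 hxb
    have hVb : 0 ≤ V b := hVnn b hb
    have hint1 : IntervalIntegrable (fun y => convPow V k y * V (x - y))
        MeasureTheory.volume 0 x :=
      (((convPow_continuous hV k).mul (hV.comp (by fun_prop))).intervalIntegrable 0 x)
    have hint2 : IntervalIntegrable (fun y => V b ^ (k + 1) * y ^ k / k.factorial * V b)
        MeasureTheory.volume 0 x := by
      apply Continuous.intervalIntegrable; fun_prop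
    have hle : ∀ y ∈ Set.Icc (0:ℝ) x,
        convPow V k y * V (x - y) ≤ V b ^ (k + 1) * y ^ k / k.factorial * V b := by
      intro y hy
      have h1 := ih y hy.1 (le_trans hy.2 hxb)
      have hxy0 : (0:ℝ) ≤ x - y := by linarith [hy.2]
      have h2 : V (x - y) ≤ V b := hVmono hxy0 hb (by have := hy.1; linarith)
      exact mul_le_mul h1.2 h2 (hVnn _ hxy0)
        (div_nonneg (mul_nonneg (pow_nonneg hVb _) (pow_nonneg hy.1 _)) (by positivity))
    constructor
    · show (0:ℝ) ≤ ∫ y in (0:ℝ)..x, convPow V k y * V (x - y)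
      apply intervalIntegral.integral_nonneg hx0
      intro y hy
      have h1 := ih y hy.1 (le_trans hy.2 hxb)
      have hxy0 : (0:ℝ) ≤ x - y := by linarith [hy.2]
      exact mul_nonneg h1.1 (hVnn _ hxy0)
    · show (∫ y in (0:ℝ)..x, convPow V k y * V (x - y)) ≤ _
      calc (∫ y in (0:ℝ)..x, convPow V k y * V (x - y))
          ≤ ∫ y in (0:ℝ)..x, V b ^ (k + 1) * y ^ k / k.factorial * V b :=
            intervalIntegral.integral_mono_on hx0 hint1 hint2 hle
        _ = V b ^ (k + 1) * V b / k.factorial * ∫ y in (0:ℝ)..x, y ^ k := by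
            rw [← intervalIntegral.integral_const_mul]
            apply intervalIntegral.integral_congr
            intro y _; ring
        _ = V b ^ (k + 1 + 1) * x ^ (k + 1) / (k + 1).factorial := by
            rw [integral_pow, Nat.factorial_succ]
            push_cast
            have : (k.factorial : ℝ) ≠ 0 := by positivity
            field_simp
            ring

/-- If moreover `W` is continuous on `[0,∞)`, then for every
`q ∈ ℝ` the series `∑ₖ qᵏ W^{*(k+1)}` converges uniformly on compact subsets of
`[0,∞)`, and `x ↦ W^{(q)}(x) = ∑ₖ qᵏ W^{*(k+1)}(x)` is continuous on `[0,∞)`. -/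
theorem stmt8 (W : ℝ → ℝ) (hWmeas : Measurable W)
    (hWnn : ∀ x ∈ Set.Ici (0:ℝ), 0 ≤ W x)
    (hWmono : MonotoneOn W (Set.Ici (0:ℝ)))
    (hWcont : ContinuousOn W (Set.Ici (0:ℝ))) :
    ∀ q : ℝ,
      (∀ K : Set ℝ, K ⊆ Set.Ici (0:ℝ) → IsCompact K →
        TendstoUniformlyOn
          (fun (n : ℕ) (x : ℝ) => ∑ k ∈ Finset.range n, q ^ k * convPow W k x)
          (fun x : ℝ => ∑' k : ℕ, q ^ k * convPow W k x) atTop K) ∧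
      ContinuousOn (fun x : ℝ => ∑' k : ℕ, q ^ k * convPow W k x) (Set.Ici (0:ℝ)) := by
  intro q
  -- the continuous modification of `W`
  set V : ℝ → ℝ := fun y => W (max y 0) with hVdef
  have hV : Continuous V :=
    hWcont.comp_continuous (continuous_id.max continuous_const) (fun y => le_max_right y 0)
  have hVnn : ∀ x ∈ Set.Ici (0:ℝ), 0 ≤ V x := fun x _ => hWnn _ (Set.mem_Ici.mpr (le_max_right _ _))
  have hVmono : MonotoneOn V (Set.Ici (0:ℝ)) := by
    intro x hx y hy hxy
    exact hWmono (Set.mem_Ici.mpr (le_max_right _ _)) (Set.mem_Ici.mpr (le_max_right _ _))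
      (sup_le_sup_right hxy 0)
  have hVeq : ∀ k, ∀ x ∈ Set.Ici (0:ℝ), convPow W k x = convPow V k x :=
    fun k x hx => convPow_congr W k x hx
  -- uniform convergence on compacts
  have main : ∀ K : Set ℝ, K ⊆ Set.Ici (0:ℝ) → IsCompact K →
      TendstoUniformlyOn
        (fun (n : ℕ) (x : ℝ) => ∑ k ∈ Finset.range n, q ^ k * convPow W k x)
        (fun x : ℝ => ∑' k : ℕ, q ^ k * convPow W k x) atTop K := by
    intro K hK hKc
    obtain ⟨b0, hb0⟩ := hKc.bddAbove
    set b : ℝ := max b0 0 with hbdef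
    have hb : 0 ≤ b := le_max_right _ _
    have hKb : K ⊆ Set.Icc 0 b := fun x hx =>
      ⟨hK hx, le_trans (hb0 hx) (le_max_left _ _)⟩
    have hVb : 0 ≤ V b := hVnn b hb
    set u : ℕ → ℝ := fun k => V b * ((|q| * V b * b) ^ k / k.factorial) with hu
    have hsum : Summable u :=
      (Real.summable_pow_div_factorial (|q| * V b * b)).mul_left (V b)
    apply tendstoUniformlyOn_tsum_nat hsum
    intro k x hx
    have hx0 : 0 ≤ x := (hKb hx).1
    have hxb : x ≤ b := (hKb hx).2
    obtain ⟨h0, h1⟩ := convPow_bound hV hVnn hVmono b hb k x hx0 hxb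
    rw [hVeq k x hx0] at *
    have : ‖q ^ k * convPow V k x‖ = |q| ^ k * convPow V k x := by
      rw [norm_mul, norm_pow, Real.norm_eq_abs, Real.norm_eq_abs, abs_of_nonneg h0]
    rw [this]
    calc |q| ^ k * convPow V k x
        ≤ |q| ^ k * (V b ^ (k + 1) * x ^ k / k.factorial) := by
          apply mul_le_mul_of_nonneg_left h1 (pow_nonneg (abs_nonneg q) k)
      _ ≤ |q| ^ k * (V b ^ (k + 1) * b ^ k / k.factorial) := by
          gcongr
      _ = u k := by
          rw [hu]
          simp only [pow_succ, mul_pow]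
          have : (k.factorial : ℝ) ≠ 0 := by positivity
          field_simp
  refine ⟨main, ?_⟩
  -- continuity on each Icc, then glue
  have contIcc : ∀ b : ℝ, 0 ≤ b →
      ContinuousOn (fun x : ℝ => ∑' k : ℕ, q ^ k * convPow W k x) (Set.Icc 0 b) := by
    intro b hb
    have hsub : Set.Icc (0:ℝ) b ⊆ Set.Ici 0 := fun x hx => hx.1
    have := main (Set.Icc 0 b) hsub isCompact_Icc
    apply this.continuousOn
    refine Filter.Eventually.frequently ?_
    filter_upwards with n
    apply ContinuousOn.mono _ hsub
    apply continuousOn_finset_sum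
    intro k _
    exact ContinuousOn.congr
      (Continuous.continuousOn
        (show Continuous fun x => q ^ k * convPow V k x from
          continuous_const.mul (convPow_continuous hV k)))
      (fun x hx => by rw [hVeq k x hx])
  intro x hx
  have hx0 : (0:ℝ) ≤ x := hx
  have h1 : ContinuousWithinAt (fun x : ℝ => ∑' k : ℕ, q ^ k * convPow W k x)
      (Set.Icc 0 (x + 1)) x :=
    (contIcc (x + 1) (by linarith)) x ⟨hx0, by linarith⟩
  apply h1.mono_of_mem_nhdsWithin
  rw [← Set.Ici_inter_Iic]
  exact inter_mem self_mem_nhdsWithin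
    (mem_nhdsWithin_of_mem_nhds (Iic_mem_nhds (by linarith)))
end

section
/- Suppose W is not almost everywhere zero and there exist Λ ≥ 0 and a function ψ : (Λ, ∞) → ℝ such that ∫_0^∞ e^{−λx} W(x) dx = 1/ψ(λ) (the integral being finite) for all λ > Λ. Then for every q ∈ ℝ and every λ > Λ with ψ(λ) > |q|, the integral ∫_0^∞ e^{−λx} W^{(q)}(x) dx converges absolutely and equals 1/(ψ(λ) − q). -/
open Set MeasureTheory
open scoped ENNReal

lemma convPow_props {W : ℝ → ℝ} (hWmeas : Measurable W)
    (hWnn : ∀ x ∈ Set.Ici (0:ℝ), 0 ≤ W x)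
    (hWmono : MonotoneOn W (Set.Ici (0:ℝ))) :
    ∀ k : ℕ, Measurable (convPow W k) ∧ (∀ x ∈ Set.Ici (0:ℝ), 0 ≤ convPow W k x) ∧
      MonotoneOn (convPow W k) (Set.Ici (0:ℝ)) := by
  intro k
  induction k with
  | zero => exact ⟨hWmeas, hWnn, hWmono⟩
  | succ k ih =>
    obtain ⟨hm, hnn, hmono⟩ := ih
    set f := convPow W k with hf
    have hFmeas : ∀ x : ℝ, Measurable (fun y => f y * W (x - y)) := fun x =>
      hm.mul (hWmeas.comp (measurable_const.sub measurable_id))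
    have hint : ∀ x : ℝ, 0 ≤ x → ∀ x' : ℝ, x ≤ x' →
        IntegrableOn (fun y => f y * W (x' - y)) (Set.Ioc 0 x) := by
      intro x hx x' hx'
      have hx'0 : (0:ℝ) ≤ x' := le_trans hx hx'
      apply Measure.integrableOn_of_bounded (M := f x * W x')
      · simp
      · exact (hFmeas x').aestronglyMeasurable
      · rw [ae_restrict_iff' measurableSet_Ioc]
        filter_upwards with y hy
        have hy0 : (0:ℝ) ≤ y := le_of_lt hy.1
        have hxy : (0:ℝ) ≤ x' - y := sub_nonneg.mpr (le_trans hy.2 hx')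
        have h1 : 0 ≤ f y := hnn y hy0
        have h2 : 0 ≤ W (x' - y) := hWnn _ hxy
        rw [Real.norm_of_nonneg (mul_nonneg h1 h2)]
        exact mul_le_mul (hmono hy0 hx hy.2) (hWmono hxy hx'0 (by linarith [hy.1]))
          h2 (hnn x hx)
    have heq : ∀ x : ℝ, 0 ≤ x →
        convPow W (k+1) x = ∫ y in Set.Ioc 0 x, f y * W (x - y) := by
      intro x hx
      show (∫ y in (0:ℝ)..x, f y * W (x - y)) = _
      rw [intervalIntegral.integral_of_le hx]
    refine ⟨?_, ?_, ?_⟩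
    · -- measurability
      have hS : MeasurableSet {p : ℝ × ℝ | 0 < p.2 ∧ p.2 ≤ p.1} :=
        (measurableSet_lt measurable_const measurable_snd).inter
          (measurableSet_le measurable_snd measurable_fst)
      have hS' : MeasurableSet {p : ℝ × ℝ | p.1 < p.2 ∧ p.2 ≤ 0} :=
        (measurableSet_lt measurable_fst measurable_snd).inter
          (measurableSet_le measurable_snd measurable_const)
      have hG : Measurable (fun p : ℝ × ℝ => f p.2 * W (p.1 - p.2)) :=
        (hm.comp measurable_snd).mul (hWmeas.comp (measurable_fst.sub measurable_snd))
      have h1 : StronglyMeasurable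
          (fun p : ℝ × ℝ => ({p : ℝ × ℝ | 0 < p.2 ∧ p.2 ≤ p.1}).indicator
            (fun p => f p.2 * W (p.1 - p.2)) p) :=
        (hG.indicator hS).stronglyMeasurable
      have h2 : StronglyMeasurable
          (fun p : ℝ × ℝ => ({p : ℝ × ℝ | p.1 < p.2 ∧ p.2 ≤ 0}).indicator
            (fun p => f p.2 * W (p.1 - p.2)) p) :=
        (hG.indicator hS').stronglyMeasurable
      have hmeas1 := h1.integral_prod_right' (ν := volume)
      have hmeas2 := h2.integral_prod_right' (ν := volume)
      have : (convPow W (k+1)) = fun x =>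
          (∫ y, ({p : ℝ × ℝ | 0 < p.2 ∧ p.2 ≤ p.1}).indicator
            (fun p => f p.2 * W (p.1 - p.2)) (x, y)) -
          (∫ y, ({p : ℝ × ℝ | p.1 < p.2 ∧ p.2 ≤ 0}).indicator
            (fun p => f p.2 * W (p.1 - p.2)) (x, y)) := by
        funext x
        show (∫ y in (0:ℝ)..x, f y * W (x - y)) = _
        rw [intervalIntegral]
        congr 1
        · rw [← integral_indicator measurableSet_Ioc]
          congr 1
        · rw [← integral_indicator measurableSet_Ioc]
          congr 1
      rw [this]
      exact (hmeas1.measurable).sub (hmeas2.measurable)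
    · -- nonneg
      intro x hx
      have hx : (0:ℝ) ≤ x := hx
      show 0 ≤ ∫ y in (0:ℝ)..x, f y * W (x - y)
      apply intervalIntegral.integral_nonneg hx
      intro y hy
      exact mul_nonneg (hnn y hy.1) (hWnn _ (sub_nonneg.mpr hy.2))
    · -- monotone
      intro x hx x' hx' hxx'
      have hx : (0:ℝ) ≤ x := hx
      have hx'0 : (0:ℝ) ≤ x' := hx'
      rw [heq x hx, heq x' hx'0]
      calc (∫ y in Set.Ioc 0 x, f y * W (x - y))
          ≤ ∫ y in Set.Ioc 0 x, f y * W (x' - y) := by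
            apply setIntegral_mono_on (hint x hx x le_rfl) (hint x hx x' hxx')
              measurableSet_Ioc
            intro y hy
            exact mul_le_mul_of_nonneg_left
              (hWmono (sub_nonneg.mpr hy.2) (sub_nonneg.mpr (le_trans hy.2 hxx'))
                (by linarith)) (hnn y (le_of_lt hy.1))
        _ ≤ ∫ y in Set.Ioc 0 x', f y * W (x' - y) := by
            apply setIntegral_mono_set (hint x' hx'0 x' le_rfl)
            · refine (ae_restrict_iff' measurableSet_Ioc).mpr ?_
              filter_upwards with y hy
              show (0:ℝ) ≤ f y * W (x' - y)
              exact mul_nonneg (hnn y (le_of_lt hy.1)) (hWnn _ (sub_nonneg.mpr hy.2))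
            · exact HasSubset.Subset.eventuallyLE (Set.Ioc_subset_Ioc_right hxx')

lemma convPow_laplace {W : ℝ → ℝ} (hWmeas : Measurable W)
    (hWnn : ∀ x ∈ Set.Ici (0:ℝ), 0 ≤ W x)
    (hWmono : MonotoneOn W (Set.Ici (0:ℝ))) (l : ℝ) :
    ∀ k : ℕ, (∫⁻ x in Set.Ioi (0:ℝ), ENNReal.ofReal (Real.exp (-l * x) * convPow W k x))
      = (∫⁻ x in Set.Ioi (0:ℝ), ENNReal.ofReal (Real.exp (-l * x) * W x)) ^ (k + 1) := by
  set B : ℝ → ℝ≥0∞ := fun z => ENNReal.ofReal (Real.exp (-l * z) * W z) with hB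
  have hBmeas : Measurable B := ((Real.measurable_exp.comp
    (measurable_const.mul measurable_id)).mul hWmeas).ennreal_ofReal
  set c : ℝ≥0∞ := ∫⁻ z in Set.Ioi (0:ℝ), B z with hc
  intro k
  induction k with
  | zero => rw [pow_one]; rfl
  | succ k ih =>
    obtain ⟨hm, hnn, hmono⟩ := convPow_props hWmeas hWnn hWmono k
    set f := convPow W k with hfdef
    set A : ℝ → ℝ≥0∞ := fun y => ENNReal.ofReal (Real.exp (-l * y) * f y) with hA
    have hAmeas : Measurable A := ((Real.measurable_exp.comp
      (measurable_const.mul measurable_id)).mul hm).ennreal_ofReal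
    set S : Set (ℝ × ℝ) := {p : ℝ × ℝ | 0 < p.2 ∧ p.2 ≤ p.1} with hSdef
    have hS : MeasurableSet S :=
      (measurableSet_lt measurable_const measurable_snd).inter
        (measurableSet_le measurable_snd measurable_fst)
    set H : ℝ × ℝ → ℝ≥0∞ := fun p => S.indicator (fun p => A p.2 * B (p.1 - p.2)) p with hH
    have hHmeas : Measurable H := by
      apply Measurable.indicator _ hS
      exact (hAmeas.comp measurable_snd).mul
        (hBmeas.comp (measurable_fst.sub measurable_snd))
    -- integrability of the convolution integrand
    have hint : ∀ x : ℝ, 0 ≤ x →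
        IntegrableOn (fun y => f y * W (x - y)) (Set.Ioc 0 x) := by
      intro x hx
      apply Measure.integrableOn_of_bounded (M := f x * W x)
      · simp
      · exact (hm.mul (hWmeas.comp (measurable_const.sub measurable_id))).aestronglyMeasurable
      · rw [ae_restrict_iff' measurableSet_Ioc]
        filter_upwards with y hy
        have hy0 : (0:ℝ) ≤ y := le_of_lt hy.1
        have hxy : (0:ℝ) ≤ x - y := sub_nonneg.mpr hy.2
        have h1 : 0 ≤ f y := hnn y hy0
        have h2 : 0 ≤ W (x - y) := hWnn _ hxy
        rw [Real.norm_of_nonneg (mul_nonneg h1 h2)]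
        exact mul_le_mul (hmono hy0 hx hy.2) (hWmono hxy hx (by linarith [hy.1]))
          h2 (hnn x hx)
    -- pointwise identity for x > 0
    have key : ∀ x ∈ Set.Ioi (0:ℝ),
        ENNReal.ofReal (Real.exp (-l * x) * convPow W (k+1) x) = ∫⁻ y, H (x, y) := by
      intro x hx
      have hx0 : (0:ℝ) ≤ x := le_of_lt hx
      have heq : convPow W (k+1) x = ∫ y in Set.Ioc 0 x, f y * W (x - y) := by
        show (∫ y in (0:ℝ)..x, f y * W (x - y)) = _
        rw [intervalIntegral.integral_of_le hx0]
      have hWx : Measurable fun y : ℝ => W (x - y) :=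
        hWmeas.comp (measurable_const.sub measurable_id)
      have hnonneg : 0 ≤ᵐ[volume.restrict (Set.Ioc 0 x)] fun y => f y * W (x - y) := by
        refine (ae_restrict_iff' measurableSet_Ioc).mpr ?_
        filter_upwards with y hy
        show (0:ℝ) ≤ f y * W (x - y)
        exact mul_nonneg (hnn y (le_of_lt hy.1)) (hWnn _ (sub_nonneg.mpr hy.2))
      have h1 : ENNReal.ofReal (convPow W (k+1) x)
          = ∫⁻ y in Set.Ioc 0 x, ENNReal.ofReal (f y * W (x - y)) := by
        rw [heq]
        exact MeasureTheory.ofReal_integral_eq_lintegral_ofReal (hint x hx0) hnonneg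
      calc ENNReal.ofReal (Real.exp (-l * x) * convPow W (k+1) x)
          = ENNReal.ofReal (Real.exp (-l * x)) * ENNReal.ofReal (convPow W (k+1) x) :=
            ENNReal.ofReal_mul (Real.exp_nonneg _)
        _ = ∫⁻ y in Set.Ioc 0 x, ENNReal.ofReal (Real.exp (-l * x))
              * ENNReal.ofReal (f y * W (x - y)) := by
            rw [h1, ← lintegral_const_mul _ (f := fun y => ENNReal.ofReal (f y * W (x - y)))
              ((hm.mul hWx).ennreal_ofReal)]
        _ = ∫⁻ y in Set.Ioc 0 x, A y * B (x - y) := by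
            apply setLIntegral_congr_fun measurableSet_Ioc
            intro y hy
            have h1 : (0:ℝ) ≤ f y := hnn y (le_of_lt hy.1)
            have h2 : (0:ℝ) ≤ W (x - y) := hWnn _ (sub_nonneg.mpr hy.2)
            have hexp : Real.exp (-l * x) = Real.exp (-l * y) * Real.exp (-l * (x - y)) := by
              rw [← Real.exp_add]; ring_nf
            rw [hexp]
            show ENNReal.ofReal (Real.exp (-l*y) * Real.exp (-l*(x-y)))
                * ENNReal.ofReal (f y * W (x - y))
              = ENNReal.ofReal (Real.exp (-l*y) * f y)
                * ENNReal.ofReal (Real.exp (-l*(x-y)) * W (x - y))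
            rw [ENNReal.ofReal_mul (Real.exp_nonneg _), ENNReal.ofReal_mul h1,
              ENNReal.ofReal_mul (Real.exp_nonneg _), ENNReal.ofReal_mul (Real.exp_nonneg _)]
            ring
        _ = ∫⁻ y, H (x, y) := by
            rw [← lintegral_indicator measurableSet_Ioc]
            apply lintegral_congr
            intro y
            rcases Classical.em (y ∈ Set.Ioc 0 x) with hy | hy
            · rw [Set.indicator_of_mem hy]
              have : (x, y) ∈ S := ⟨hy.1, hy.2⟩
              rw [hH]; simp only [Set.indicator_of_mem this]
            · rw [Set.indicator_of_notMem hy]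
              have : (x, y) ∉ S := fun h => hy ⟨h.1, h.2⟩
              rw [hH]; simp only [Set.indicator_of_notMem this]
    -- lift to full lintegral in x
    have step1 : (∫⁻ x in Set.Ioi (0:ℝ), ENNReal.ofReal (Real.exp (-l * x) * convPow W (k+1) x))
        = ∫⁻ x, ∫⁻ y, H (x, y) := by
      rw [setLIntegral_congr_fun measurableSet_Ioi
        key]
      rw [← lintegral_indicator measurableSet_Ioi]
      apply lintegral_congr
      intro x
      rcases Classical.em (x ∈ Set.Ioi (0:ℝ)) with hx | hx
      · rw [Set.indicator_of_mem hx]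
      · rw [Set.indicator_of_notMem hx]
        symm
        have : ∀ y : ℝ, H (x, y) = 0 := by
          intro y
          apply Set.indicator_of_notMem
          intro h
          exact hx (lt_of_lt_of_le h.1 h.2)
        simp [this]
    -- Tonelli swap and translation invariance
    have step2 : (∫⁻ x, ∫⁻ y, H (x, y)) = (∫⁻ y in Set.Ioi (0:ℝ), A y) * c := by
      rw [lintegral_lintegral_swap hHmeas.aemeasurable]
      have inner : ∀ y : ℝ, (∫⁻ x, H (x, y))
          = (Set.Ioi (0:ℝ)).indicator (fun y => A y * c) y := by
        intro y
        rcases Classical.em (y ∈ Set.Ioi (0:ℝ)) with hy | hy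
        · rw [Set.indicator_of_mem hy]
          have hy0 : (0:ℝ) < y := hy
          have hpt : ∀ x : ℝ, H (x, y)
              = (Set.Ici y).indicator (fun x => A y * B (x - y)) x := by
            intro x
            rcases Classical.em (x ∈ Set.Ici y) with hx | hx
            · rw [Set.indicator_of_mem hx]
              have : (x, y) ∈ S := ⟨hy0, hx⟩
              rw [hH]; simp only [Set.indicator_of_mem this]
            · have : (x, y) ∉ S := fun h => hx h.2
              rw [Set.indicator_of_notMem hx, hH]
              simp only [Set.indicator_of_notMem this]
          have hBy : Measurable fun x : ℝ => B (x - y) :=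
            hBmeas.comp (measurable_id.sub measurable_const)
          rw [lintegral_congr hpt, lintegral_indicator measurableSet_Ici,
            lintegral_const_mul _ hBy]
          congr 1
          calc (∫⁻ x in Set.Ici y, B (x - y))
              = ∫⁻ x, (Set.Ici (0:ℝ)).indicator B (x - y) := by
                rw [← lintegral_indicator measurableSet_Ici]
                apply lintegral_congr
                intro x
                rcases Classical.em (x ∈ Set.Ici y) with hx | hx
                · rw [Set.indicator_of_mem hx]
                  exact (Set.indicator_of_mem (show x - y ∈ Set.Ici (0:ℝ) from
                    Set.mem_Ici.mpr (sub_nonneg.mpr (Set.mem_Ici.mp hx))) B).symm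
                · rw [Set.indicator_of_notMem hx]
                  exact (Set.indicator_of_notMem (show x - y ∉ Set.Ici (0:ℝ) from
                    fun h => hx (by simpa [sub_nonneg] using h)) B).symm
            _ = ∫⁻ z, (Set.Ici (0:ℝ)).indicator B z :=
                lintegral_sub_right_eq_self ((Set.Ici (0:ℝ)).indicator B) y
            _ = ∫⁻ z in Set.Ici (0:ℝ), B z := lintegral_indicator measurableSet_Ici _
            _ = c := by rw [hc, ← restrict_Ioi_eq_restrict_Ici]
        · rw [Set.indicator_of_notMem hy]
          have : ∀ x : ℝ, H (x, y) = 0 := by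
            intro x
            apply Set.indicator_of_notMem
            intro h
            exact hy h.1
          simp [this]
      rw [lintegral_congr inner, lintegral_indicator measurableSet_Ioi,
        lintegral_mul_const _ hAmeas]
    rw [step1, step2, ih]
    ring

/-- Suppose `W` (measurable, nondecreasing, `[0,∞)`-valued on
`[0,∞)`) is not almost everywhere zero and there are `Λ ≥ 0` and
`ψ : (Λ,∞) → ℝ` with `∫₀^∞ e^{-λx} W(x) dx = 1/ψ(λ)` (the integral being
finite) for all `λ > Λ`.  Then for every `q ∈ ℝ` and every `λ > Λ` with
`ψ(λ) > |q|`, the integral `∫₀^∞ e^{-λx} W^{(q)}(x) dx` converges absolutely and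
equals `1/(ψ(λ) - q)`. -/
theorem stmt9 (W : ℝ → ℝ) (hWmeas : Measurable W)
    (hWnn : ∀ x ∈ Set.Ici (0:ℝ), 0 ≤ W x)
    (hWmono : MonotoneOn W (Set.Ici (0:ℝ)))
    (hWne : ¬ (∀ᵐ x ∂(volume.restrict (Set.Ici (0:ℝ))), W x = 0))
    (Λ : ℝ) (hΛ : 0 ≤ Λ) (ψ : ℝ → ℝ)
    (hlap : ∀ l : ℝ, Λ < l →
      IntegrableOn (fun x => Real.exp (-l * x) * W x) (Set.Ioi (0:ℝ)) volume ∧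
      (∫ x in Set.Ioi (0:ℝ), Real.exp (-l * x) * W x) = 1 / ψ l) :
    ∀ (q l : ℝ), Λ < l → |q| < ψ l →
      IntegrableOn
        (fun x => Real.exp (-l * x) * ∑' k : ℕ, q ^ k * convPow W k x)
        (Set.Ioi (0:ℝ)) volume ∧
      (∫ x in Set.Ioi (0:ℝ), Real.exp (-l * x) * ∑' k : ℕ, q ^ k * convPow W k x)
        = 1 / (ψ l - q) := by
  intro q l hl hq
  obtain ⟨hint0, heq0⟩ := hlap l hl
  have props := convPow_props hWmeas hWnn hWmono
  have hΦ := convPow_laplace hWmeas hWnn hWmono l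
  set c : ℝ≥0∞ := ∫⁻ x in Set.Ioi (0:ℝ), ENNReal.ofReal (Real.exp (-l * x) * W x) with hc
  have hWnnae : 0 ≤ᵐ[volume.restrict (Set.Ioi (0:ℝ))] fun x => Real.exp (-l * x) * W x := by
    refine (ae_restrict_iff' measurableSet_Ioi).mpr ?_
    filter_upwards with x hx
    exact mul_nonneg (Real.exp_nonneg _) (hWnn x (Set.mem_Ici.mpr (le_of_lt hx)))
  set L : ℝ := 1 / ψ l with hLdef
  have hc_eq : c = ENNReal.ofReal L := by
    rw [hc, ← MeasureTheory.ofReal_integral_eq_lintegral_ofReal hint0 hWnnae, heq0]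
  have hLpos : 0 < L := by
    rcases lt_or_eq_of_le (integral_nonneg_of_ae (μ := volume.restrict (Set.Ioi (0:ℝ))) hWnnae)
      with h | h
    · rwa [heq0] at h
    · exfalso
      apply hWne
      have h0 := (integral_eq_zero_iff_of_nonneg_ae hWnnae hint0).mp h.symm
      rw [← restrict_Ioi_eq_restrict_Ici]
      filter_upwards [h0] with x hx
      have hx' : Real.exp (-l * x) * W x = 0 := hx
      rcases mul_eq_zero.mp hx' with h' | h'
      · exact absurd h' (Real.exp_ne_zero _)
      · exact h'
  have hψpos : 0 < ψ l := one_div_pos.mp hLpos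
  have hψL : ψ l = 1 / L := by rw [hLdef, one_div_one_div]
  have hqL : |q| * L < 1 := by
    have : |q| < 1 / L := hψL ▸ hq
    exact (lt_div_iff₀ hLpos).mp this
  -- the summands
  set h : ℕ → ℝ → ℝ := fun k x => Real.exp (-l * x) * (q ^ k * convPow W k x) with hhdef
  set u : ℕ → ℝ → ℝ := fun k x => Real.exp (-l * x) * convPow W k x with hudef
  have humeas : ∀ k, Measurable (u k) := fun k =>
    (Real.measurable_exp.comp (measurable_const.mul measurable_id)).mul (props k).1
  have hhmeas : ∀ k, Measurable (h k) := fun k =>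
    (Real.measurable_exp.comp (measurable_const.mul measurable_id)).mul
      (measurable_const.mul (props k).1)
  have hunn : ∀ k, 0 ≤ᵐ[volume.restrict (Set.Ioi (0:ℝ))] u k := by
    intro k
    refine (ae_restrict_iff' measurableSet_Ioi).mpr ?_
    filter_upwards with x hx
    exact mul_nonneg (Real.exp_nonneg _) ((props k).2.1 x (Set.mem_Ici.mpr (le_of_lt hx)))
  have hulint : ∀ k, (∫⁻ x in Set.Ioi (0:ℝ), ENNReal.ofReal (u k x))
      = ENNReal.ofReal (L ^ (k+1)) := by
    intro k
    rw [hudef]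
    show (∫⁻ x in Set.Ioi (0:ℝ), ENNReal.ofReal (Real.exp (-l * x) * convPow W k x)) = _
    rw [hΦ k, hc_eq, ← ENNReal.ofReal_pow (le_of_lt hLpos)]
  have huint : ∀ k, IntegrableOn (u k) (Set.Ioi (0:ℝ)) := by
    intro k
    refine ⟨(humeas k).aestronglyMeasurable, ?_⟩
    rw [hasFiniteIntegral_iff_norm]
    have : ∀ᵐ x ∂(volume.restrict (Set.Ioi (0:ℝ))),
        ENNReal.ofReal ‖u k x‖ = ENNReal.ofReal (u k x) := by
      filter_upwards [hunn k] with x hx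
      rw [Real.norm_of_nonneg hx]
    rw [lintegral_congr_ae this, hulint k]
    exact ENNReal.ofReal_lt_top
  have huval : ∀ k, (∫ x in Set.Ioi (0:ℝ), u k x) = L ^ (k+1) := by
    intro k
    rw [integral_eq_lintegral_of_nonneg_ae (hunn k) (humeas k).aestronglyMeasurable,
      hulint k, ENNReal.toReal_ofReal (pow_nonneg (le_of_lt hLpos) _)]
  have hhu : ∀ k, h k = fun x => q ^ k * u k x := by
    intro k; funext x; rw [hhdef, hudef]; ring
  have hhint : ∀ k, IntegrableOn (h k) (Set.Ioi (0:ℝ)) := by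
    intro k
    rw [hhu k]
    exact (huint k).const_mul _
  have hhval : ∀ k, (∫ x in Set.Ioi (0:ℝ), h k x) = q ^ k * L ^ (k+1) := by
    intro k
    rw [hhu k, integral_const_mul, huval k]
  -- summability of the lintegrals of norms
  have hnorm : ∀ k, (∫⁻ x in Set.Ioi (0:ℝ), (‖h k x‖₊ : ℝ≥0∞))
      = ENNReal.ofReal (|q| ^ k) * ENNReal.ofReal (L ^ (k+1)) := by
    intro k
    have hmu : Measurable fun x => ENNReal.ofReal (u k x) := (humeas k).ennreal_ofReal
    rw [← hulint k, ← lintegral_const_mul _ hmu]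
    apply setLIntegral_congr_fun measurableSet_Ioi
    intro x hx
    have hu_nn : 0 ≤ u k x :=
      mul_nonneg (Real.exp_nonneg _) ((props k).2.1 x (Set.mem_Ici.mpr (le_of_lt hx)))
    have habs : |h k x| = |q| ^ k * u k x := by
      have : h k x = q ^ k * u k x := by rw [hhdef, hudef]; ring
      rw [this, abs_mul, abs_pow, abs_of_nonneg hu_nn]
    beta_reduce
    rw [show ((‖h k x‖₊ : ℝ≥0∞)) = ENNReal.ofReal (|h k x|) from
      (Real.enorm_eq_ofReal_abs _), habs,
      ENNReal.ofReal_mul (pow_nonneg (abs_nonneg q) k)]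
  have hsum_ne : (∑' k : ℕ, ∫⁻ x in Set.Ioi (0:ℝ), (‖h k x‖₊ : ℝ≥0∞)) ≠ ⊤ := by
    have hqL0 : (0:ℝ) ≤ |q| * L := mul_nonneg (abs_nonneg q) hLpos.le
    have heach : ∀ k : ℕ, (∫⁻ x in Set.Ioi (0:ℝ), (‖h k x‖₊ : ℝ≥0∞))
        = ENNReal.ofReal (|q| * L) ^ k * ENNReal.ofReal L := by
      intro k
      rw [hnorm k, ← ENNReal.ofReal_mul (pow_nonneg (abs_nonneg q) k),
        show |q| ^ k * L ^ (k+1) = (|q| * L) ^ k * L by rw [mul_pow]; ring,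
        ENNReal.ofReal_mul (pow_nonneg hqL0 k), ENNReal.ofReal_pow hqL0]
    rw [tsum_congr heach, ENNReal.tsum_mul_right, ENNReal.tsum_geometric]
    have hr1 : ENNReal.ofReal (|q| * L) < 1 := by
      rw [← ENNReal.ofReal_one]
      exact ENNReal.ofReal_lt_ofReal_iff_of_nonneg hqL0 |>.mpr hqL
    apply ENNReal.mul_ne_top
    · rw [Ne, ENNReal.inv_eq_top, tsub_eq_zero_iff_le]
      exact fun hcon => absurd hr1 (not_lt.mpr hcon)
    · exact ENNReal.ofReal_ne_top
  have hae : ∀ᵐ x ∂(volume.restrict (Set.Ioi (0:ℝ))), Summable fun k => ‖h k x‖ := by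
    have hmk : ∀ k : ℕ, AEMeasurable (fun x => (‖h k x‖₊ : ℝ≥0∞))
        (volume.restrict (Set.Ioi (0:ℝ))) := fun k => (hhmeas k).nnnorm.coe_nnreal_ennreal.aemeasurable
    have hlt : ∀ᵐ x ∂(volume.restrict (Set.Ioi (0:ℝ))),
        (∑' k : ℕ, (‖h k x‖₊ : ℝ≥0∞)) < ⊤ := by
      refine ae_lt_top' (AEMeasurable.ennreal_tsum hmk) ?_
      rw [lintegral_tsum hmk]
      exact hsum_ne
    filter_upwards [hlt] with x hx
    have hs : Summable fun k => ‖h k x‖₊ := by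
      rw [← ENNReal.tsum_coe_ne_top_iff_summable]
      exact hx.ne
    simpa [← NNReal.summable_coe, coe_nnnorm] using hs
  set T : ℝ → ℝ := fun x => ∑' k : ℕ, h k x with hT
  have hTmeas : AEStronglyMeasurable T (volume.restrict (Set.Ioi (0:ℝ))) := by
    have hpart : ∀ n : ℕ, Measurable fun x => ∑ k ∈ Finset.range n, h k x := fun n =>
      Finset.measurable_sum _ (fun k _ => hhmeas k)
    refine (aemeasurable_of_tendsto_metrizable_ae' (fun n => (hpart n).aemeasurable)
      ?_).aestronglyMeasurable
    filter_upwards [hae] with x hx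
    exact hx.of_norm.hasSum.tendsto_sum_nat
  have hbound : ∀ᵐ x ∂(volume.restrict (Set.Ioi (0:ℝ))),
      (‖T x‖₊ : ℝ≥0∞) ≤ ∑' k : ℕ, (‖h k x‖₊ : ℝ≥0∞) := by
    filter_upwards [hae] with x hx
    have hs : Summable fun k => ‖h k x‖₊ := by
      rw [← NNReal.summable_coe]
      simpa [coe_nnnorm] using hx
    calc (‖T x‖₊ : ℝ≥0∞) ≤ (↑(∑' k : ℕ, ‖h k x‖₊) : ℝ≥0∞) :=
          ENNReal.coe_le_coe.mpr (nnnorm_tsum_le hs)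
      _ = ∑' k : ℕ, (‖h k x‖₊ : ℝ≥0∞) := ENNReal.coe_tsum hs
  have hTint : IntegrableOn T (Set.Ioi (0:ℝ)) := by
    refine ⟨hTmeas, ?_⟩
    have hmk : ∀ k : ℕ, AEMeasurable (fun x => (‖h k x‖₊ : ℝ≥0∞))
        (volume.restrict (Set.Ioi (0:ℝ))) := fun k => (hhmeas k).nnnorm.coe_nnreal_ennreal.aemeasurable
    calc (∫⁻ x in Set.Ioi (0:ℝ), (‖T x‖₊ : ℝ≥0∞))
        ≤ ∫⁻ x in Set.Ioi (0:ℝ), ∑' k : ℕ, (‖h k x‖₊ : ℝ≥0∞) := lintegral_mono_ae hbound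
      _ = ∑' k : ℕ, ∫⁻ x in Set.Ioi (0:ℝ), (‖h k x‖₊ : ℝ≥0∞) := lintegral_tsum hmk
      _ < ⊤ := hsum_ne.lt_top
  have hTarget : (fun x => Real.exp (-l * x) * ∑' k : ℕ, q ^ k * convPow W k x) = T := by
    funext x
    rw [hT]
    exact tsum_mul_left.symm
  have hint_eq : (∫ x in Set.Ioi (0:ℝ), T x) = ∑' k : ℕ, ∫ x in Set.Ioi (0:ℝ), h k x :=
    integral_tsum (fun k => (hhmeas k).aestronglyMeasurable) hsum_ne
  have hgeom : (∑' k : ℕ, (q * L) ^ k) = (1 - q * L)⁻¹ :=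
    tsum_geometric_of_norm_lt_one
      (by rw [Real.norm_eq_abs, abs_mul, abs_of_nonneg hLpos.le]; exact hqL)
  have h2 : (0:ℝ) < 1 - q * L := by
    have h3 : q * L ≤ |q| * L := mul_le_mul_of_nonneg_right (le_abs_self q) hLpos.le
    linarith
  have hfinal : (∑' k : ℕ, q ^ k * L ^ (k+1)) = 1 / (ψ l - q) := by
    have h1 : ∀ k : ℕ, q ^ k * L ^ (k+1) = L * (q * L) ^ k := by
      intro k; rw [mul_pow]; ring
    rw [tsum_congr h1, tsum_mul_left, hgeom, hψL]
    have hd : 1 / L - q = (1 - q * L) / L := by field_simp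
    rw [hd, one_div_div, div_eq_mul_inv]
  constructor
  · rw [hTarget]; exact hTint
  · rw [hTarget, hint_eq, tsum_congr hhval, hfinal]
end

section
/- Let ψ : [0, ∞) → ℝ satisfy ψ(λ) → +∞ as λ → ∞, and let p ≥ 0. Let W, W_p : [0, ∞) → [0, ∞) be continuous, nondecreasing, and not identically zero, and suppose there is Λ ≥ 0 such that for all λ > Λ: ∫_0^∞ e^{−λx} W(x) dx = 1/ψ(λ) and ∫_0^∞ e^{−λx} W_p(x) dx = 1/(ψ(λ + p) − ψ(p)), both integrals being finite. Then for every q ∈ ℝ and every x ≥ 0, W^{(q + ψ(p))}(x) = e^{p x} W_p^{(q)}(x). -/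
open Set MeasureTheory Filter
open scoped Topology

lemma convPow_tilt (V : ℝ → ℝ) (r : ℝ) :
    ∀ k : ℕ, ∀ x : ℝ, 0 ≤ x →
      convPow (fun y => Real.exp (r * y) * V y) k x = Real.exp (r * x) * convPow V k x := by
  intro k
  induction k with
  | zero => intro x _; rfl
  | succ k ih =>
    intro x hx
    simp only [convPow]
    rw [← intervalIntegral.integral_const_mul]
    apply intervalIntegral.integral_congr
    intro y hy
    rw [Set.uIcc_of_le hx] at hy
    simp only
    rw [ih y hy.1, show r * x = r * y + r * (x - y) by ring, Real.exp_add]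
    ring

lemma convPow_LT (h : ℝ → ℝ) (hi : IntegrableOn h (Ioi 0)) :
    ∀ k : ℕ, IntegrableOn (convPow h k) (Ioi 0) ∧
      (∫ x in Ioi (0:ℝ), convPow h k x) = (∫ x in Ioi (0:ℝ), h x) ^ (k+1) := by
  intro k
  induction k with
  | zero => exact ⟨hi, by simp [convPow]⟩
  | succ k ih =>
    obtain ⟨ihi, ihv⟩ := ih
    have hpc : posConvolution (convPow h k) h (ContinuousLinearMap.mul ℝ ℝ) volume
        = (Ioi (0:ℝ)).indicator (convPow h (k+1)) := by
      funext x
      unfold posConvolution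
      simp only [ContinuousLinearMap.mul_apply']
      rfl
    have hint : IntegrableOn (convPow h (k+1)) (Ioi 0) := by
      have := integrable_posConvolution ihi hi (ContinuousLinearMap.mul ℝ ℝ)
      rw [hpc] at this
      exact (integrable_indicator_iff measurableSet_Ioi).mp this
    refine ⟨hint, ?_⟩
    have hv := integral_posConvolution ihi hi (ContinuousLinearMap.mul ℝ ℝ)
    simp only [ContinuousLinearMap.mul_apply'] at hv
    calc (∫ x in Ioi (0:ℝ), convPow h (k+1) x)
        = ∫ x in Ioi (0:ℝ), ∫ t in (0:ℝ)..x, convPow h k t * h (x - t) := rfl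
      _ = (∫ x in Ioi (0:ℝ), convPow h k x) * (∫ x in Ioi (0:ℝ), h x) := hv
      _ = (∫ x in Ioi (0:ℝ), h x) ^ (k+1+1) := by rw [ihv]; ring

lemma convPow_LT' (h : ℝ → ℝ) (l : ℝ)
    (hi : IntegrableOn (fun x => Real.exp (-l * x) * h x) (Ioi 0)) (k : ℕ) :
    IntegrableOn (fun x => Real.exp (-l * x) * convPow h k x) (Ioi 0) ∧
      (∫ x in Ioi (0:ℝ), Real.exp (-l * x) * convPow h k x)
        = (∫ x in Ioi (0:ℝ), Real.exp (-l * x) * h x) ^ (k+1) := by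
  set ht : ℝ → ℝ := fun x => Real.exp (-l * x) * h x with hht
  have hhh : h = fun y => Real.exp (l * y) * ht y := by
    funext y
    rw [hht]
    simp only
    rw [← mul_assoc, ← Real.exp_add, show l * y + -l * y = 0 by ring, Real.exp_zero, one_mul]
  have heq : EqOn (fun x => Real.exp (-l * x) * convPow h k x) (convPow ht k) (Ioi 0) := by
    intro x hx
    simp only
    conv_lhs => rw [hhh]
    rw [convPow_tilt ht l k x (le_of_lt hx), ← mul_assoc, ← Real.exp_add,
      show -l * x + l * x = 0 by ring, Real.exp_zero, one_mul]
  obtain ⟨h1, h2⟩ := convPow_LT ht hi k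
  constructor
  · exact h1.congr_fun (fun x hx => (heq hx).symm) measurableSet_Ioi
  · rw [setIntegral_congr_fun measurableSet_Ioi heq, h2]

lemma convPow_aux (h : ℝ → ℝ) (C : ℝ) (hcont : ContinuousOn h (Ici 0))
    (hbd : ∀ x ∈ Ici (0:ℝ), h x ∈ Icc (0:ℝ) C) :
    ∀ k : ℕ, ContinuousOn (convPow h k) (Ici 0) ∧
      ∀ x ∈ Ici (0:ℝ), convPow h k x ∈ Icc (0:ℝ) (C ^ (k+1) * x ^ k / (k.factorial : ℝ)) := by
  have hC : 0 ≤ C := le_trans (hbd 0 Set.self_mem_Ici).1 (hbd 0 Set.self_mem_Ici).2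
  intro k
  induction k with
  | zero =>
    refine ⟨hcont, fun x hx => ?_⟩
    simpa [convPow] using hbd x hx
  | succ k ih =>
    obtain ⟨ihc, ihb⟩ := ih
    have hint : ∀ x : ℝ, 0 ≤ x → ContinuousOn (fun y => convPow h k y * h (x - y)) (Icc 0 x) := by
      intro x hx
      apply ContinuousOn.mul
      · exact ihc.mono (fun y hy => hy.1)
      · apply hcont.comp (continuous_const.sub continuous_id).continuousOn
        intro y hy
        exact sub_nonneg.mpr hy.2
    have hii : ∀ x : ℝ, 0 ≤ x →
        IntervalIntegrable (fun y => convPow h k y * h (x - y)) volume 0 x := by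
      intro x hx
      apply ContinuousOn.intervalIntegrable
      rw [Set.uIcc_of_le hx]
      exact hint x hx
    constructor
    · -- continuity
      intro x₀ hx₀
      set b := x₀ + 1 with hb
      have hx₀b : x₀ < b := by simp [hb]
      have hbpos : (0:ℝ) ≤ b := le_trans hx₀ hx₀b.le
      set M := C ^ (k+1) * b ^ k / (k.factorial : ℝ) * C with hM
      have hMnn : 0 ≤ M := by
        apply mul_nonneg _ hC
        apply div_nonneg (mul_nonneg (pow_nonneg hC _) (pow_nonneg hbpos _)) (Nat.cast_nonneg _)
      set F : ℝ → ℝ → ℝ :=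
        fun x t => (Ioc (0:ℝ) x).indicator (fun t => convPow h k t * h (x - t)) t with hF
      have hae : ∀ᵐ t : ℝ, t ≠ x₀ := by
        rw [ae_iff]
        have : {t : ℝ | ¬ t ≠ x₀} = {x₀} := by ext t; simp
        rw [this]
        exact measure_singleton _
      have key : ContinuousWithinAt (fun x => ∫ t in (0:ℝ)..b, F x t) (Ici 0) x₀ := by
        apply intervalIntegral.continuousWithinAt_of_dominated_interval (bound := fun _ => M)
        · filter_upwards with x
          rcases le_or_gt x 0 with hx | hx
          · have hFx : F x = fun _ => (0:ℝ) := by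
              funext t
              simp [hF, Set.Ioc_eq_empty (not_lt.mpr hx)]
            rw [hFx]
            exact aestronglyMeasurable_const
          · have hc : AEStronglyMeasurable (fun t => convPow h k t * h (x - t))
                (volume.restrict (Ioc 0 x)) :=
              ContinuousOn.aestronglyMeasurable
                ((hint x hx.le).mono Ioc_subset_Icc_self) measurableSet_Ioc
            exact ((aestronglyMeasurable_indicator_iff measurableSet_Ioc).mpr hc).restrict
        · filter_upwards [(eventually_lt_nhds hx₀b).filter_mono nhdsWithin_le_nhds] with x hxb
          apply Eventually.of_forall
          intro t _
          by_cases hmem : t ∈ Ioc (0:ℝ) x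
          · have h1 : 0 ≤ convPow h k t := (ihb t hmem.1.le).1
            have h2 : 0 ≤ h (x - t) := (hbd _ (sub_nonneg.mpr hmem.2)).1
            have : F x t = convPow h k t * h (x - t) := indicator_of_mem hmem _
            rw [this, Real.norm_eq_abs, abs_of_nonneg (mul_nonneg h1 h2)]
            have hfacpos : (0:ℝ) < (k.factorial : ℝ) := by
              exact_mod_cast Nat.factorial_pos k
            have hb1 : convPow h k t ≤ C ^ (k+1) * b ^ k / (k.factorial : ℝ) := by
              refine le_trans (ihb t hmem.1.le).2 ?_
              apply div_le_div_of_nonneg_right ?_ hfacpos.le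
              exact mul_le_mul_of_nonneg_left
                (pow_le_pow_left₀ hmem.1.le (le_trans hmem.2 hxb.le) k) (pow_nonneg hC _)
            calc convPow h k t * h (x - t)
                ≤ (C ^ (k+1) * b ^ k / (k.factorial : ℝ)) * C :=
                  mul_le_mul hb1 (hbd _ (sub_nonneg.mpr hmem.2)).2 h2
                    (div_nonneg (mul_nonneg (pow_nonneg hC _) (pow_nonneg hbpos _))
                      (Nat.cast_nonneg _))
              _ = M := rfl
          · have : F x t = 0 := indicator_of_notMem hmem _
            rw [this]
            simpa using hMnn
        · exact intervalIntegrable_const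
        · filter_upwards [hae] with t ht hmem
          have ht0 : 0 < t := by
            rw [Set.uIoc_of_le hbpos] at hmem; exact hmem.1
          rcases lt_or_gt_of_ne ht with htlt | htgt
          · have hxt : 0 < x₀ - t := sub_pos.mpr htlt
            have hca : ContinuousAt (fun x => convPow h k t * h (x - t)) x₀ := by
              apply ContinuousAt.mul continuousAt_const
              have hsub : ContinuousAt (fun x : ℝ => x - t) x₀ :=
                (continuous_id.sub continuous_const).continuousAt
              have hh : ContinuousAt h (x₀ - t) := hcont.continuousAt (Ici_mem_nhds hxt)
              exact ContinuousAt.comp (f := fun x : ℝ => x - t) (x := x₀) hh hsub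
            apply ContinuousWithinAt.congr_of_eventuallyEq hca.continuousWithinAt
            · filter_upwards [(eventually_gt_nhds htlt).filter_mono nhdsWithin_le_nhds] with x hx
              exact Set.indicator_of_mem (Set.mem_Ioc.mpr ⟨ht0, hx.le⟩) _
            · exact Set.indicator_of_mem (Set.mem_Ioc.mpr ⟨ht0, htlt.le⟩) _
          · apply ContinuousWithinAt.congr_of_eventuallyEq continuousWithinAt_const
            · filter_upwards [(eventually_lt_nhds htgt).filter_mono nhdsWithin_le_nhds] with x hx
              exact indicator_of_notMem (fun hm => absurd hm.2 (not_le.mpr hx)) _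
            · exact indicator_of_notMem (fun hm => absurd hm.2 (not_le.mpr htgt)) _
      have heq : ∀ x ∈ Ici (0:ℝ) ∩ Iic b, (∫ t in (0:ℝ)..b, F x t) = convPow h (k+1) x := by
        intro x hx
        simp only [convPow]
        have hxb' : x ≤ b := hx.2
        rw [intervalIntegral.integral_of_le hbpos, intervalIntegral.integral_of_le hx.1,
          setIntegral_indicator measurableSet_Ioc, Set.Ioc_inter_Ioc, max_self,
          min_eq_right hxb']
      apply key.congr_of_eventuallyEq
      · filter_upwards [(eventually_lt_nhds hx₀b).filter_mono nhdsWithin_le_nhds,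
          eventually_mem_nhdsWithin] with x h1 h2
        exact (heq x ⟨h2, h1.le⟩).symm
      · exact (heq x₀ ⟨hx₀, hx₀b.le⟩).symm
    · -- bounds
      intro x hx
      simp only [convPow]
      constructor
      · apply intervalIntegral.integral_nonneg hx
        intro y hy
        exact mul_nonneg (ihb y hy.1).1 ((hbd (x - y) (sub_nonneg.mpr hy.2)).1)
      · have step : (∫ y in (0:ℝ)..x, convPow h k y * h (x - y))
            ≤ ∫ y in (0:ℝ)..x, (C ^ (k+1) * C / (k.factorial : ℝ)) * y ^ k := by
          apply intervalIntegral.integral_mono_on hx (hii x hx)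
          · exact (continuous_const.mul (continuous_pow k)).intervalIntegrable 0 x
          · intro y hy
            have h2 : 0 ≤ h (x - y) := (hbd _ (sub_nonneg.mpr hy.2)).1
            calc convPow h k y * h (x - y)
                ≤ (C ^ (k+1) * y ^ k / (k.factorial : ℝ)) * C :=
                  mul_le_mul (ihb y hy.1).2 (hbd _ (sub_nonneg.mpr hy.2)).2 h2
                    (div_nonneg (mul_nonneg (pow_nonneg hC _) (pow_nonneg hy.1 _))
                      (Nat.cast_nonneg _))
              _ = (C ^ (k+1) * C / (k.factorial : ℝ)) * y ^ k := by ring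
        rw [intervalIntegral.integral_const_mul, integral_pow] at step
        refine step.trans (le_of_eq ?_)
        have hfac : ((k+1).factorial : ℝ) = (k+1) * (k.factorial : ℝ) := by
          exact_mod_cast Nat.factorial_succ k
        rw [hfac, zero_pow (Nat.succ_ne_zero k)]
        have hk : (k.factorial : ℝ) ≠ 0 := Nat.cast_ne_zero.mpr (Nat.factorial_ne_zero k)
        field_simp
        ring

section S

variable (h : ℝ → ℝ) (C c : ℝ)

-- summability of the dominating series
lemma dom_summable (r : ℝ) :
    Summable (fun k : ℕ => C * r ^ k / (k.factorial : ℝ)) := by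
  apply ((Real.summable_pow_div_factorial r).mul_left C).congr
  intro k
  rw [mul_div_assoc]

lemma dom_eq (x : ℝ) (k : ℕ) :
    |c| ^ k * (C ^ (k+1) * x ^ k / (k.factorial : ℝ)) = C * (|c| * C * x) ^ k / (k.factorial : ℝ) := by
  rw [mul_pow, mul_pow]
  ring

lemma dom_tsum (r : ℝ) :
    (∑' k : ℕ, C * r ^ k / (k.factorial : ℝ)) = C * Real.exp r := by
  have hexp : Real.exp r = ∑' k : ℕ, r ^ k / (k.factorial : ℝ) := by
    rw [Real.exp_eq_exp_ℝ, NormedSpace.exp_eq_tsum_div]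
  rw [hexp, ← tsum_mul_left]
  congr 1
  funext k
  rw [mul_div_assoc]

variable (hcb : ∀ k : ℕ, ∀ x ∈ Ici (0:ℝ),
    convPow h k x ∈ Icc (0:ℝ) (C ^ (k+1) * x ^ k / (k.factorial : ℝ)))

include hcb in
lemma S_term_bound (x : ℝ) (hx : 0 ≤ x) (k : ℕ) :
    ‖c ^ k * convPow h k x‖ ≤ C * (|c| * C * x) ^ k / (k.factorial : ℝ) := by
  rw [← dom_eq, Real.norm_eq_abs, abs_mul, abs_pow]
  apply mul_le_mul_of_nonneg_left ?_ (pow_nonneg (abs_nonneg c) k)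
  rw [abs_of_nonneg (hcb k x hx).1]
  exact (hcb k x hx).2

include hcb in
lemma S_summable (x : ℝ) (hx : 0 ≤ x) :
    Summable (fun k : ℕ => c ^ k * convPow h k x) := by
  apply Summable.of_norm
  exact Summable.of_nonneg_of_le (fun k => norm_nonneg _)
    (S_term_bound h C c hcb x hx) (dom_summable C _)

include hcb in
lemma S_bound (x : ℝ) (hx : 0 ≤ x) :
    |∑' k : ℕ, c ^ k * convPow h k x| ≤ C * Real.exp (|c| * C * x) := by
  have hnorms : Summable (fun k : ℕ => ‖c ^ k * convPow h k x‖) :=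
    Summable.of_nonneg_of_le (fun k => norm_nonneg _)
      (S_term_bound h C c hcb x hx) (dom_summable C _)
  calc |∑' k : ℕ, c ^ k * convPow h k x| ≤ ∑' k : ℕ, ‖c ^ k * convPow h k x‖ :=
        norm_tsum_le_tsum_norm hnorms
    _ ≤ ∑' k : ℕ, C * (|c| * C * x) ^ k / (k.factorial : ℝ) :=
        hnorms.tsum_le_tsum (S_term_bound h C c hcb x hx) (dom_summable C _)
    _ = C * Real.exp (|c| * C * x) := dom_tsum C _

variable (hcc : ∀ k : ℕ, ContinuousOn (convPow h k) (Ici 0))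

include hcb hcc in
lemma S_cont : ContinuousOn (fun x => ∑' k : ℕ, c ^ k * convPow h k x) (Ici 0) := by
  intro x₀ hx₀
  have hx₀b : x₀ < x₀ + 1 := by linarith
  have hcont : ContinuousOn (fun x => ∑' k : ℕ, c ^ k * convPow h k x) (Icc 0 (x₀+1)) := by
    apply continuousOn_tsum (u := fun k => C * (|c| * C * (x₀+1)) ^ k / (k.factorial : ℝ))
    · intro k
      exact continuousOn_const.mul ((hcc k).mono (fun y hy => hy.1))
    · exact dom_summable C _
    · intro k x hx
      refine le_trans (S_term_bound h C c hcb x hx.1 k) ?_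
      have hC : 0 ≤ C := by
        rcases (hcb 0 0 Set.self_mem_Ici) with ⟨h1, h2⟩
        simpa using le_trans h1 h2
      apply div_le_div_of_nonneg_right ?_ (Nat.cast_nonneg _)
      apply mul_le_mul_of_nonneg_left ?_ hC
      apply pow_le_pow_left₀ (mul_nonneg (mul_nonneg (abs_nonneg c) hC) hx.1) ?_ k
      exact mul_le_mul_of_nonneg_left hx.2 (mul_nonneg (abs_nonneg c) hC)
  have hnb : 𝓝[Icc (0:ℝ) (x₀+1)] x₀ = 𝓝[Ici 0] x₀ := by
    rw [← Set.Ici_inter_Iic, ← nhdsWithin_restrict' (Ici 0) (Iic_mem_nhds hx₀b)]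
  have := hcont x₀ ⟨hx₀, hx₀b.le⟩
  unfold ContinuousWithinAt at this ⊢
  rwa [hnb] at this

include hcb hcc in
lemma S_integrable (B l : ℝ) (hBl : B < l) (hB : |c| * C ≤ B) :
    IntegrableOn (fun x => Real.exp (-l * x) * ∑' k : ℕ, c ^ k * convPow h k x) (Ioi 0) := by
  have hC : 0 ≤ C := by
    rcases (hcb 0 0 Set.self_mem_Ici) with ⟨h1, h2⟩
    simpa using le_trans h1 h2
  apply Integrable.mono' (g := fun x => C * Real.exp (-(l - B) * x))
  · exact (exp_neg_integrableOn_Ioi 0 (by linarith)).const_mul C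
  · apply ContinuousOn.aestronglyMeasurable ?_ measurableSet_Ioi
    apply ContinuousOn.mono ?_ Ioi_subset_Ici_self
    exact (Continuous.continuousOn (by fun_prop)).mul (S_cont h C c hcb hcc)
  · rw [ae_restrict_iff' measurableSet_Ioi]
    apply Eventually.of_forall
    intro x hx
    have hx0 : (0:ℝ) ≤ x := le_of_lt hx
    rw [Real.norm_eq_abs, abs_mul, abs_of_pos (Real.exp_pos _)]
    calc Real.exp (-l*x) * |∑' k : ℕ, c ^ k * convPow h k x|
        ≤ Real.exp (-l*x) * (C * Real.exp (|c| * C * x)) :=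
          mul_le_mul_of_nonneg_left (S_bound h C c hcb x hx0) (Real.exp_pos _).le
      _ ≤ C * Real.exp (-(l - B) * x) := by
          rw [mul_comm (Real.exp _), mul_assoc, ← Real.exp_add]
          apply mul_le_mul_of_nonneg_left ?_ hC
          apply Real.exp_le_exp.mpr
          have h1 : |c| * C * x ≤ B * x := mul_le_mul_of_nonneg_right hB hx0
          have h2 : -(l - B) * x = B * x + -l * x := by ring
          linarith
include hcb hcc in
lemma LT_S (l : ℝ) (hi : IntegrableOn (fun x => Real.exp (-l * x) * h x) (Ioi 0))
    (hP : |c| * (∫ x in Ioi (0:ℝ), Real.exp (-l * x) * h x) < 1) :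
    (∫ x in Ioi (0:ℝ), Real.exp (-l * x) * ∑' k : ℕ, c ^ k * convPow h k x)
      = (∫ x in Ioi (0:ℝ), Real.exp (-l * x) * h x)
        * (1 - c * (∫ x in Ioi (0:ℝ), Real.exp (-l * x) * h x))⁻¹ := by
  set P := ∫ x in Ioi (0:ℝ), Real.exp (-l * x) * h x with hPdef
  have hPnn : 0 ≤ P := by
    apply setIntegral_nonneg measurableSet_Ioi
    intro x hx
    exact mul_nonneg (Real.exp_pos _).le (hcb 0 x (Set.mem_Ici.mpr (le_of_lt hx))).1
  set Gk : ℕ → ℝ → ℝ := fun k x => Real.exp (-l * x) * convPow h k x with hGdef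
  have hGi : ∀ k, IntegrableOn (Gk k) (Ioi 0) := fun k => (convPow_LT' h l hi k).1
  have hGv : ∀ k, (∫ x in Ioi (0:ℝ), Gk k x) = P ^ (k+1) := fun k => (convPow_LT' h l hi k).2
  have hstep : EqOn (fun x => Real.exp (-l * x) * ∑' k : ℕ, c ^ k * convPow h k x)
      (fun x => ∑' k : ℕ, c ^ k * Gk k x) (Ioi 0) := by
    intro x hx
    simp only
    rw [← tsum_mul_left]
    apply tsum_congr
    intro k
    simp only [hGdef]
    ring
  rw [setIntegral_congr_fun measurableSet_Ioi hstep]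
  have hmeas : ∀ k : ℕ, AEStronglyMeasurable (fun x => c ^ k * Gk k x)
      (volume.restrict (Ioi 0)) := by
    intro k
    apply ContinuousOn.aestronglyMeasurable ?_ measurableSet_Ioi
    apply ContinuousOn.mono ?_ Ioi_subset_Ici_self
    exact continuousOn_const.mul ((Continuous.continuousOn (by fun_prop)).mul (hcc k))
  have hbd' : ∀ k : ℕ, (∫⁻ x in Ioi (0:ℝ), ‖c ^ k * Gk k x‖₊)
      = ENNReal.ofReal (|c| ^ k * P ^ (k+1)) := by
    intro k
    have hint : Integrable (fun x => |c| ^ k * Gk k x) (volume.restrict (Ioi 0)) :=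
      (hGi k).const_mul _
    have hnn : 0 ≤ᵐ[volume.restrict (Ioi 0)] fun x => |c| ^ k * Gk k x := by
      rw [EventuallyLE, ae_restrict_iff' measurableSet_Ioi]
      apply Eventually.of_forall
      intro x hx
      exact mul_nonneg (pow_nonneg (abs_nonneg c) k)
        (mul_nonneg (Real.exp_pos _).le (hcb k x (Set.mem_Ici.mpr (le_of_lt hx))).1)
    have heq := ofReal_integral_eq_lintegral_ofReal hint hnn
    rw [integral_const_mul, hGv k] at heq
    rw [heq]
    apply lintegral_congr_ae
    apply (ae_restrict_iff' measurableSet_Ioi).mpr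
    apply Eventually.of_forall
    intro x hx
    show ((‖c ^ k * Gk k x‖₊ : ENNReal)) = ENNReal.ofReal (|c| ^ k * Gk k x)
    rw [← enorm_eq_nnnorm, ← ofReal_norm, Real.norm_eq_abs, abs_mul, abs_pow,
      abs_of_nonneg (mul_nonneg (Real.exp_pos _).le (hcb k x (Set.mem_Ici.mpr (le_of_lt hx))).1)]
  have hsum2 : Summable (fun k : ℕ => |c| ^ k * P ^ (k+1)) := by
    apply ((summable_geometric_of_lt_one (by positivity) hP).mul_left P).congr
    intro k
    rw [mul_pow]
    ring
  have hnn2 : ∀ k : ℕ, 0 ≤ |c| ^ k * P ^ (k+1) := fun k =>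
    mul_nonneg (pow_nonneg (abs_nonneg c) k) (pow_nonneg hPnn _)
  have hfin : (∑' k : ℕ, ∫⁻ x in Ioi (0:ℝ), ‖c ^ k * Gk k x‖₊) ≠ ⊤ := by
    have : (∑' k : ℕ, ∫⁻ x in Ioi (0:ℝ), ‖c ^ k * Gk k x‖₊)
        = ENNReal.ofReal (∑' k : ℕ, |c| ^ k * P ^ (k+1)) := by
      rw [tsum_congr hbd', ← ENNReal.ofReal_tsum_of_nonneg hnn2 hsum2]
    rw [this]
    exact ENNReal.ofReal_ne_top
  rw [integral_tsum hmeas hfin]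
  calc (∑' k : ℕ, ∫ x in Ioi (0:ℝ), c ^ k * Gk k x)
      = ∑' k : ℕ, c ^ k * P ^ (k+1) :=
        tsum_congr (fun k => by rw [integral_const_mul, hGv k])
    _ = P * ∑' k : ℕ, (c * P) ^ k := by
        rw [← tsum_mul_left]
        exact tsum_congr (fun k => by rw [mul_pow]; ring)
    _ = P * (1 - c * P)⁻¹ := by
        rw [tsum_geometric_of_norm_lt_one ?_]
        rw [Real.norm_eq_abs, abs_mul, abs_of_nonneg hPnn]
        exact hP

end S

lemma laplace_zero (D : ℝ → ℝ) (hD : ContinuousOn D (Ici 0)) (K b l₁ : ℝ)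
    (hbd : ∀ x ∈ Ici (0:ℝ), |D x| ≤ K * Real.exp (b * x))
    (hz : ∀ l : ℝ, l₁ ≤ l → (∫ x in Ioi (0:ℝ), Real.exp (-l * x) * D x) = 0) :
    ∀ x ∈ Ici (0:ℝ), D x = 0 := by
  have hK : 0 ≤ K := by
    have h1 := hbd 0 Set.self_mem_Ici
    have h2 : (0:ℝ) ≤ |D 0| := abs_nonneg _
    simp only [mul_zero, Real.exp_zero, mul_one] at h1
    linarith
  rcases eq_or_lt_of_le hK with hK0 | hKpos
  · intro x hx
    have h1 := hbd x hx
    rw [← hK0, zero_mul] at h1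
    exact abs_eq_zero.mp (le_antisymm h1 (abs_nonneg _))
  obtain ⟨m, hm⟩ := exists_nat_ge (max l₁ (b + 1))
  have hml : l₁ ≤ (m:ℝ) := le_trans (le_max_left _ _) hm
  have hmb : b + 1 ≤ (m:ℝ) := le_trans (le_max_right _ _) hm
  set g₀ : ℝ → ℝ := fun t => if 0 < t then t ^ m * D (-Real.log t) else 0 with hg₀def
  have hg₀exp : ∀ x : ℝ, g₀ (Real.exp (-x)) = Real.exp (-x) ^ m * D x := by
    intro x
    rw [hg₀def]
    simp only [if_pos (Real.exp_pos (-x)), Real.log_exp, neg_neg]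
  have hg₀bd : ∀ t ∈ Icc (0:ℝ) 1, |g₀ t| ≤ K * t := by
    intro t ht
    rcases eq_or_lt_of_le ht.1 with h0 | h0
    · rw [hg₀def]
      simp [← h0]
    · rw [hg₀def]
      simp only [if_pos h0]
      rw [abs_mul, abs_pow, abs_of_pos h0]
      have h1 : |D (-Real.log t)| ≤ K * Real.exp (b * -Real.log t) := by
        apply hbd
        simp only [Set.mem_Ici, neg_nonneg]
        exact Real.log_nonpos h0.le ht.2
      have h2 : Real.exp (b * -Real.log t) = t ^ (-b) := by
        rw [Real.rpow_def_of_pos h0]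
        ring_nf
      calc t ^ m * |D (-Real.log t)|
          ≤ t ^ m * (K * t ^ (-b)) := by
            rw [h2] at h1
            exact mul_le_mul_of_nonneg_left h1 (pow_nonneg h0.le m)
        _ = K * t ^ ((m:ℝ) + (-b)) := by
            rw [Real.rpow_add h0, Real.rpow_natCast]
            ring
        _ ≤ K * t ^ (1:ℝ) := by
            apply mul_le_mul_of_nonneg_left ?_ hK
            apply Real.rpow_le_rpow_of_exponent_ge h0 ht.2
            linarith
        _ = K * t := by rw [Real.rpow_one]
  have hg₀cont : ContinuousOn g₀ (Icc 0 1) := by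
    intro t₀ ht₀
    rcases eq_or_lt_of_le ht₀.1 with h0 | h0
    · have hval : g₀ t₀ = 0 := by
        rw [hg₀def]
        simp [← h0]
      rw [ContinuousWithinAt, hval]
      have hb1 : ∀ᶠ t in nhdsWithin t₀ (Icc 0 1), ‖g₀ t‖ ≤ K * t := by
        filter_upwards [eventually_mem_nhdsWithin] with t ht
        rw [Real.norm_eq_abs]
        exact hg₀bd t ht
      have hb2 : Tendsto (fun t : ℝ => K * t) (nhdsWithin t₀ (Icc 0 1)) (nhds 0) := by
        have h1 : Tendsto (fun t : ℝ => K * t) (nhdsWithin t₀ (Icc 0 1)) (nhds (K * t₀)) :=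
          ((continuous_const.mul continuous_id).tendsto t₀).mono_left nhdsWithin_le_nhds
        rw [show K * t₀ = 0 by rw [← h0, mul_zero]] at h1
        exact h1
      exact squeeze_zero_norm' hb1 hb2
    · have hty : ContinuousWithinAt (fun t => t ^ m * D (-Real.log t)) (Icc 0 1) t₀ := by
        apply ContinuousWithinAt.mul (continuous_pow m).continuousAt.continuousWithinAt
        have h1 : ContinuousWithinAt (fun t : ℝ => -Real.log t) (Icc 0 1) t₀ :=
          ((Real.continuousAt_log (ne_of_gt h0)).neg).continuousWithinAt
        apply ContinuousWithinAt.comp (f := fun t : ℝ => -Real.log t) (g := D)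
          (hD (-Real.log t₀) ?_) h1 ?_
        · simp only [Set.mem_Ici, neg_nonneg]
          exact Real.log_nonpos h0.le ht₀.2
        · intro t ht
          simp only [Set.mem_Ici, neg_nonneg]
          exact Real.log_nonpos ht.1 ht.2
      apply ContinuousWithinAt.congr_of_eventuallyEq hty
      · filter_upwards [(eventually_gt_nhds h0).filter_mono nhdsWithin_le_nhds] with t ht
        rw [hg₀def]
        simp only [if_pos ht]
      · rw [hg₀def]
        simp only [if_pos h0]
  have hmom : ∀ n : ℕ, (∫ t in Ioo (0:ℝ) 1, t ^ n * g₀ t) = 0 := by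
    intro n
    have hderiv : ∀ x ∈ Ioi (0:ℝ),
        HasDerivWithinAt (fun x : ℝ => Real.exp (-x)) (-Real.exp (-x)) (Ioi 0) x := by
      intro x _
      have h1 := (Real.hasDerivAt_exp (-x)).comp x (hasDerivAt_neg x)
      have h2 := h1.hasDerivWithinAt (s := Ioi 0)
      rw [mul_neg, mul_one] at h2
      exact h2
    have hinj : InjOn (fun x : ℝ => Real.exp (-x)) (Ioi 0) := by
      intro a _ c _ hac
      have := Real.exp_injective hac
      linarith [neg_injective this]
    have himg : (fun x : ℝ => Real.exp (-x)) '' (Ioi 0) = Ioo 0 1 := by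
      ext y
      constructor
      · rintro ⟨x, hx, rfl⟩
        refine ⟨Real.exp_pos _, ?_⟩
        rw [show (1:ℝ) = Real.exp 0 by simp]
        exact Real.exp_lt_exp.mpr (by simpa using hx)
      · rintro ⟨hy0, hy1⟩
        refine ⟨-Real.log y, ?_, ?_⟩
        · simpa using Real.log_neg hy0 hy1
        · simp [Real.exp_log hy0]
    have hsub := integral_image_eq_integral_abs_deriv_smul measurableSet_Ioi hderiv hinj
      (fun t => t ^ n * g₀ t)
    rw [himg] at hsub
    rw [hsub]
    have heqn : EqOn (fun x => |(-Real.exp (-x))| • (Real.exp (-x) ^ n * g₀ (Real.exp (-x))))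
        (fun x => Real.exp (-((n:ℝ) + (m:ℝ) + 1) * x) * D x) (Ioi 0) := by
      intro x _
      simp only [smul_eq_mul, abs_neg, abs_of_pos (Real.exp_pos _)]
      rw [hg₀exp x, ← Real.exp_nat_mul, ← Real.exp_nat_mul, ← mul_assoc, ← Real.exp_add,
        ← mul_assoc, ← Real.exp_add]
      congr 2
      ring
    rw [setIntegral_congr_fun measurableSet_Ioi heqn]
    apply hz
    have hn : (0:ℝ) ≤ (n:ℝ) := Nat.cast_nonneg n
    linarith
  -- integrability of polynomial * g₀ on Ioo 0 1
  have hI : ∀ p : Polynomial ℝ, IntegrableOn (fun t => Polynomial.eval t p * g₀ t) (Ioo 0 1) := by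
    intro p
    apply IntegrableOn.mono_set ?_ Ioo_subset_Icc_self
    exact ((p.continuous_aeval.continuousOn).mul hg₀cont).integrableOn_compact isCompact_Icc
  have hpoly : ∀ p : Polynomial ℝ, (∫ t in Ioo (0:ℝ) 1, Polynomial.eval t p * g₀ t) = 0 := by
    intro p
    induction p using Polynomial.induction_on' with
    | add p q hp hq =>
      simp only [Polynomial.eval_add, add_mul]
      rw [integral_add (hI p) (hI q), hp, hq, add_zero]
    | monomial n a =>
      simp only [Polynomial.eval_monomial]
      have heq : EqOn (fun t => a * t ^ n * g₀ t) (fun t => a * (t ^ n * g₀ t)) (Ioo 0 1) := by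
        intro t _
        ring
      rw [setIntegral_congr_fun measurableSet_Ioo heq, integral_const_mul, hmom n, mul_zero]
  -- ∫ g₀² = 0
  have hIgg : IntegrableOn (fun t => g₀ t * g₀ t) (Ioo 0 1) := by
    apply IntegrableOn.mono_set ?_ Ioo_subset_Icc_self
    exact (hg₀cont.mul hg₀cont).integrableOn_compact isCompact_Icc
  have hKbd : ∀ t ∈ Icc (0:ℝ) 1, |g₀ t| ≤ K := by
    intro t ht
    refine le_trans (hg₀bd t ht) ?_
    nlinarith [ht.2, hK]
  have hsq : (∫ t in Ioo (0:ℝ) 1, g₀ t * g₀ t) = 0 := by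
    have key : ∀ ε : ℝ, 0 < ε → |∫ t in Ioo (0:ℝ) 1, g₀ t * g₀ t| ≤ ε * K := by
      intro ε hε
      obtain ⟨p, hp⟩ := exists_polynomial_near_of_continuousOn 0 1 g₀ hg₀cont ε hε
      have hval : (∫ t in Ioo (0:ℝ) 1, (g₀ t - Polynomial.eval t p) * g₀ t)
          = ∫ t in Ioo (0:ℝ) 1, g₀ t * g₀ t := by
        have heq : EqOn (fun t => (g₀ t - Polynomial.eval t p) * g₀ t)
            (fun t => g₀ t * g₀ t - Polynomial.eval t p * g₀ t) (Ioo 0 1) := by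
          intro t _
          ring
        rw [setIntegral_congr_fun measurableSet_Ioo heq, integral_sub hIgg (hI p), hpoly p,
          sub_zero]
      rw [← hval, ← Real.norm_eq_abs]
      have hvol : volume (Ioo (0:ℝ) 1) < ⊤ := by
        rw [Real.volume_Ioo]
        exact ENNReal.ofReal_lt_top
      calc ‖∫ t in Ioo (0:ℝ) 1, (g₀ t - Polynomial.eval t p) * g₀ t‖
          ≤ (ε * K) * (volume (Ioo (0:ℝ) 1)).toReal := by
            apply norm_setIntegral_le_of_norm_le_const hvol
            · intro t ht
              rw [Real.norm_eq_abs, abs_mul]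
              have h1 : |g₀ t - Polynomial.eval t p| ≤ ε := by
                rw [abs_sub_comm]
                exact (hp t (Ioo_subset_Icc_self ht)).le
              exact mul_le_mul h1 (hKbd t (Ioo_subset_Icc_self ht)) (abs_nonneg _) hε.le
        _ = ε * K := by
            rw [Real.volume_Ioo]
            simp
    have habs : |∫ t in Ioo (0:ℝ) 1, g₀ t * g₀ t| ≤ 0 := by
      apply le_of_forall_pos_le_add
      intro δ hδ
      have h1 := key (δ / K) (div_pos hδ hKpos)
      rw [div_mul_cancel₀ _ (ne_of_gt hKpos)] at h1
      linarith
    exact abs_eq_zero.mp (le_antisymm habs (abs_nonneg _))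
  -- g₀ vanishes on Ioo 0 1
  have hg0 : ∀ t ∈ Ioo (0:ℝ) 1, g₀ t = 0 := by
    have hnn : 0 ≤ᵐ[volume.restrict (Ioo (0:ℝ) 1)] fun t => g₀ t * g₀ t := by
      apply Eventually.of_forall
      intro t
      exact mul_self_nonneg _
    have hae := (integral_eq_zero_iff_of_nonneg_ae hnn hIgg).mp hsq
    rw [Filter.EventuallyEq, ae_restrict_iff' measurableSet_Ioo] at hae
    intro t₀ ht₀
    by_contra hne
    have hca : ContinuousAt g₀ t₀ :=
      hg₀cont.continuousAt (Icc_mem_nhds ht₀.1 ht₀.2)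
    have hev1 : ∀ᶠ t in nhds t₀, g₀ t ≠ 0 := hca.eventually_ne hne
    have hev2 : ∀ᶠ t in nhds t₀, t ∈ Ioo (0:ℝ) 1 := isOpen_Ioo.mem_nhds ht₀
    have hev := hev1.and hev2
    rw [Metric.eventually_nhds_iff_ball] at hev
    obtain ⟨δ, hδ, hball⟩ := hev
    have hzero := MeasureTheory.mem_ae_iff.mp hae
    have hsubset : Metric.ball t₀ δ ⊆ {t | t ∈ Ioo (0:ℝ) 1 → (fun t => g₀ t * g₀ t) t = (0:ℝ → ℝ) t}ᶜ := by
      intro t ht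
      obtain ⟨h1, h2⟩ := hball t ht
      simp only [Set.mem_compl_iff, Set.mem_setOf_eq, Pi.zero_apply]
      intro hcon
      exact h1 (by nlinarith [hcon h2])
    have hpos : (0:ENNReal) < volume (Metric.ball t₀ δ) := Metric.measure_ball_pos volume t₀ hδ
    have hzb := measure_mono_null hsubset hzero
    exact absurd hzb (ne_of_gt hpos)
  -- conclude for x > 0
  have hpos : ∀ x : ℝ, 0 < x → D x = 0 := by
    intro x hx
    have ht : Real.exp (-x) ∈ Ioo (0:ℝ) 1 := ⟨Real.exp_pos _, Real.exp_lt_one_iff.mpr (by linarith)⟩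
    have h1 := hg0 _ ht
    rw [hg₀exp x] at h1
    have h2 : Real.exp (-x) ^ m ≠ 0 := pow_ne_zero m (Real.exp_ne_zero _)
    exact (mul_eq_zero.mp h1).resolve_left h2
  -- boundary
  intro x hx
  rcases eq_or_lt_of_le (show (0:ℝ) ≤ x from hx) with h0 | h0
  · have hlim1 : Tendsto D (nhdsWithin 0 (Ioi 0)) (nhds (D 0)) :=
      (hD 0 Set.self_mem_Ici).mono_left (nhdsWithin_mono 0 Ioi_subset_Ici_self)
    have hlim2 : Tendsto D (nhdsWithin 0 (Ioi 0)) (nhds 0) := by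
      apply Tendsto.congr' ?_ tendsto_const_nhds
      filter_upwards [eventually_mem_nhdsWithin] with t ht
      exact (hpos t ht).symm
    rw [← h0]
    exact tendsto_nhds_unique hlim1 hlim2
  · exact hpos x h0


lemma const_le_setIntegral (W : ℝ → ℝ) (l x₀ : ℝ) (hl : 0 ≤ l) (hx₀ : x₀ ∈ Ici (0:ℝ))
    (hmono : MonotoneOn W (Ici 0)) (hnn : ∀ x ∈ Ici (0:ℝ), 0 ≤ W x)
    (hi : IntegrableOn (fun x => Real.exp (-l * x) * W x) (Ioi 0)) :
    Real.exp (-l * (x₀+1)) * W x₀ ≤ ∫ x in Ioi (0:ℝ), Real.exp (-l * x) * W x := by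
  have hsub : Ioc x₀ (x₀+1) ⊆ Ioi 0 := fun y hy => lt_of_le_of_lt hx₀ hy.1
  have hnn' : 0 ≤ᵐ[volume.restrict (Ioi 0)] fun x => Real.exp (-l * x) * W x := by
    apply (ae_restrict_iff' measurableSet_Ioi).mpr
    apply Eventually.of_forall
    intro x hx
    exact mul_nonneg (Real.exp_pos _).le (hnn x (Set.mem_Ici.mpr (le_of_lt hx)))
  have hstep1 : (∫ x in Ioc x₀ (x₀+1), Real.exp (-l * x) * W x)
      ≤ ∫ x in Ioi (0:ℝ), Real.exp (-l * x) * W x :=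
    setIntegral_mono_set hi hnn' (HasSubset.Subset.eventuallyLE hsub)
  have hstep2 : (∫ _x in Ioc x₀ (x₀+1), Real.exp (-l * (x₀+1)) * W x₀)
      ≤ ∫ x in Ioc x₀ (x₀+1), Real.exp (-l * x) * W x := by
    apply setIntegral_mono_on
    · exact integrableOn_const measure_Ioc_lt_top.ne
    · exact hi.mono_set hsub
    · exact measurableSet_Ioc
    · intro x hx
      have h1 : Real.exp (-l * (x₀+1)) ≤ Real.exp (-l * x) := by
        apply Real.exp_le_exp.mpr
        have := mul_le_mul_of_nonneg_left hx.2 hl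
        linarith
      have h2 : W x₀ ≤ W x := hmono hx₀ (le_trans hx₀ hx.1.le) hx.1.le
      exact mul_le_mul h1 h2 (hnn x₀ hx₀) (Real.exp_pos _).le
  have hcval : (∫ _x in Ioc x₀ (x₀+1), Real.exp (-l * (x₀+1)) * W x₀)
      = Real.exp (-l * (x₀+1)) * W x₀ := by
    rw [setIntegral_const, Real.volume_real_Ioc]
    norm_num
  linarith

lemma LT_pos (W : ℝ → ℝ) (l : ℝ) (hl : 0 ≤ l) (hmono : MonotoneOn W (Ici 0))
    (hnn : ∀ x ∈ Ici (0:ℝ), 0 ≤ W x) (hne : ∃ x ∈ Ici (0:ℝ), W x ≠ 0)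
    (hi : IntegrableOn (fun x => Real.exp (-l * x) * W x) (Ioi 0)) :
    0 < ∫ x in Ioi (0:ℝ), Real.exp (-l * x) * W x := by
  obtain ⟨x₀, hx₀, hWx₀⟩ := hne
  have hWpos : 0 < W x₀ := lt_of_le_of_ne (hnn x₀ hx₀) (Ne.symm hWx₀)
  have := const_le_setIntegral W l x₀ hl hx₀ hmono hnn hi
  have hcstpos : 0 < Real.exp (-l * (x₀+1)) * W x₀ := mul_pos (Real.exp_pos _) hWpos
  linarith

lemma growth (W : ℝ → ℝ) (l : ℝ) (hl : 0 ≤ l) (hmono : MonotoneOn W (Ici 0))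
    (hnn : ∀ x ∈ Ici (0:ℝ), 0 ≤ W x)
    (hi : IntegrableOn (fun x => Real.exp (-l * x) * W x) (Ioi 0)) :
    ∀ x ∈ Ici (0:ℝ), W x ≤ (∫ y in Ioi (0:ℝ), Real.exp (-l * y) * W y) * Real.exp (l * (x+1)) := by
  intro x hx
  have h1 := const_le_setIntegral W l x hl hx hmono hnn hi
  have h2 : W x = Real.exp (l * (x+1)) * (Real.exp (-l * (x+1)) * W x) := by
    rw [← mul_assoc, ← Real.exp_add, show l * (x+1) + -l * (x+1) = 0 by ring, Real.exp_zero,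
      one_mul]
  rw [h2]
  rw [mul_comm (∫ y in Ioi (0:ℝ), Real.exp (-l * y) * W y) (Real.exp (l * (x+1)))]
  exact mul_le_mul_of_nonneg_left h1 (Real.exp_pos _).le




/-- Let `ψ : [0,∞) → ℝ` with `ψ(λ) → ∞` as `λ → ∞`, let
`p ≥ 0`, and let `W, W_p : [0,∞) → [0,∞)` be continuous, nondecreasing and not
identically zero, such that for some `Λ ≥ 0` and all `λ > Λ`,
`∫₀^∞ e^{-λx} W(x) dx = 1/ψ(λ)` and `∫₀^∞ e^{-λx} W_p(x) dx = 1/(ψ(λ+p) - ψ(p))`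
(both integrals finite).  Then for every `q ∈ ℝ` and `x ≥ 0`,
`W^{(q + ψ(p))}(x) = e^{p x} W_p^{(q)}(x)`  (exponential tilting of scale
functions). -/
theorem stmt10 (ψ : ℝ → ℝ) (hψ : Tendsto ψ atTop atTop)
    (p : ℝ) (hp : 0 ≤ p)
    (W Wp : ℝ → ℝ)
    (hWcont : ContinuousOn W (Set.Ici (0:ℝ)))
    (hWmono : MonotoneOn W (Set.Ici (0:ℝ)))
    (hWnn : ∀ x ∈ Set.Ici (0:ℝ), 0 ≤ W x)
    (hWne : ∃ x ∈ Set.Ici (0:ℝ), W x ≠ 0)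
    (hWpcont : ContinuousOn Wp (Set.Ici (0:ℝ)))
    (hWpmono : MonotoneOn Wp (Set.Ici (0:ℝ)))
    (hWpnn : ∀ x ∈ Set.Ici (0:ℝ), 0 ≤ Wp x)
    (hWpne : ∃ x ∈ Set.Ici (0:ℝ), Wp x ≠ 0)
    (Λ : ℝ) (hΛ : 0 ≤ Λ)
    (hlapW : ∀ l : ℝ, Λ < l →
      IntegrableOn (fun x => Real.exp (-l * x) * W x) (Set.Ioi (0:ℝ)) volume ∧
      (∫ x in Set.Ioi (0:ℝ), Real.exp (-l * x) * W x) = 1 / ψ l)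
    (hlapWp : ∀ l : ℝ, Λ < l →
      IntegrableOn (fun x => Real.exp (-l * x) * Wp x) (Set.Ioi (0:ℝ)) volume ∧
      (∫ x in Set.Ioi (0:ℝ), Real.exp (-l * x) * Wp x) = 1 / (ψ (l + p) - ψ p)) :
    ∀ (q : ℝ), ∀ x ∈ Set.Ici (0:ℝ),
      (∑' k : ℕ, (q + ψ p) ^ k * convPow W k x)
        = Real.exp (p * x) * ∑' k : ℕ, q ^ k * convPow Wp k x := by
  intro q
  obtain ⟨l₀, hl₀⟩ : ∃ t : ℝ, t = Λ + 1 := ⟨_, rfl⟩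
  have hl₀Λ : Λ < l₀ := by rw [hl₀]; linarith
  have hl₀nn : (0:ℝ) ≤ l₀ := by rw [hl₀]; linarith
  obtain ⟨hWint, hWval⟩ := hlapW l₀ hl₀Λ
  obtain ⟨hWpint, hWpval⟩ := hlapWp l₀ hl₀Λ
  have hWgrow := growth W l₀ hl₀nn hWmono hWnn hWint
  have hWpgrow := growth Wp l₀ hl₀nn hWpmono hWpnn hWpint
  have hIWpos : 0 < ∫ y in Ioi (0:ℝ), Real.exp (-l₀ * y) * W y :=
    LT_pos W l₀ hl₀nn hWmono hWnn hWne hWint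
  have hIWppos : 0 < ∫ y in Ioi (0:ℝ), Real.exp (-l₀ * y) * Wp y :=
    LT_pos Wp l₀ hl₀nn hWpmono hWpnn hWpne hWpint
  obtain ⟨a, ha⟩ : ∃ t : ℝ, t = Λ + p + 1 := ⟨_, rfl⟩
  have hal₀ : l₀ ≤ a := by rw [ha, hl₀]; linarith
  obtain ⟨f, hf⟩ : ∃ t : ℝ → ℝ, t = fun x => Real.exp (-a * x) * W x := ⟨_, rfl⟩
  obtain ⟨g, hg⟩ : ∃ t : ℝ → ℝ, t = fun x => Real.exp (-(a - p) * x) * Wp x := ⟨_, rfl⟩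
  obtain ⟨C, hC⟩ : ∃ t : ℝ, t = max ((∫ y in Ioi (0:ℝ), Real.exp (-l₀ * y) * W y) * Real.exp l₀)
      ((∫ y in Ioi (0:ℝ), Real.exp (-l₀ * y) * Wp y) * Real.exp l₀) := ⟨_, rfl⟩
  have hCf : (∫ y in Ioi (0:ℝ), Real.exp (-l₀ * y) * W y) * Real.exp l₀ ≤ C := by
    rw [hC]; exact le_max_left _ _
  have hCg : (∫ y in Ioi (0:ℝ), Real.exp (-l₀ * y) * Wp y) * Real.exp l₀ ≤ C := by
    rw [hC]; exact le_max_right _ _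
  have hCpos : 0 < C := lt_of_lt_of_le (mul_pos hIWpos (Real.exp_pos _)) hCf
  have hfb : ∀ x ∈ Ici (0:ℝ), f x ∈ Icc (0:ℝ) C := by
    intro x hx
    rw [hf]
    simp only
    refine ⟨mul_nonneg (Real.exp_pos _).le (hWnn x hx), ?_⟩
    calc Real.exp (-a * x) * W x ≤ Real.exp (-a * x) *
          ((∫ y in Ioi (0:ℝ), Real.exp (-l₀ * y) * W y) * Real.exp (l₀ * (x+1))) :=
          mul_le_mul_of_nonneg_left (hWgrow x hx) (Real.exp_pos _).le
      _ = ((∫ y in Ioi (0:ℝ), Real.exp (-l₀ * y) * W y) * Real.exp l₀)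
            * Real.exp ((l₀ - a) * x) := by
          rw [show l₀ * (x+1) = l₀ * x + l₀ by ring, Real.exp_add,
            show (l₀ - a) * x = -a * x + l₀ * x by ring, Real.exp_add]
          ring
      _ ≤ ((∫ y in Ioi (0:ℝ), Real.exp (-l₀ * y) * W y) * Real.exp l₀) * 1 := by
          apply mul_le_mul_of_nonneg_left ?_ (mul_pos hIWpos (Real.exp_pos _)).le
          rw [Real.exp_le_one_iff]
          have h1 : l₀ - a ≤ 0 := by linarith
          exact mul_nonpos_of_nonpos_of_nonneg h1 hx
      _ = (∫ y in Ioi (0:ℝ), Real.exp (-l₀ * y) * W y) * Real.exp l₀ := mul_one _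
      _ ≤ C := hCf
  have hgb : ∀ x ∈ Ici (0:ℝ), g x ∈ Icc (0:ℝ) C := by
    intro x hx
    rw [hg]
    simp only
    refine ⟨mul_nonneg (Real.exp_pos _).le (hWpnn x hx), ?_⟩
    have hzero : l₀ - (a - p) = 0 := by rw [ha, hl₀]; ring
    calc Real.exp (-(a - p) * x) * Wp x ≤ Real.exp (-(a - p) * x) *
          ((∫ y in Ioi (0:ℝ), Real.exp (-l₀ * y) * Wp y) * Real.exp (l₀ * (x+1))) :=
          mul_le_mul_of_nonneg_left (hWpgrow x hx) (Real.exp_pos _).le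
      _ = ((∫ y in Ioi (0:ℝ), Real.exp (-l₀ * y) * Wp y) * Real.exp l₀)
            * Real.exp ((l₀ - (a - p)) * x) := by
          rw [show l₀ * (x+1) = l₀ * x + l₀ by ring, Real.exp_add,
            show (l₀ - (a - p)) * x = -(a - p) * x + l₀ * x by ring, Real.exp_add]
          ring
      _ = (∫ y in Ioi (0:ℝ), Real.exp (-l₀ * y) * Wp y) * Real.exp l₀ := by
          rw [hzero, zero_mul, Real.exp_zero, mul_one]
      _ ≤ C := hCg
  have hfcont : ContinuousOn f (Ici 0) := by
    rw [hf]
    exact (Continuous.continuousOn (by fun_prop)).mul hWcont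
  have hgcont : ContinuousOn g (Ici 0) := by
    rw [hg]
    exact (Continuous.continuousOn (by fun_prop)).mul hWpcont
  have hfaux := convPow_aux f C hfcont hfb
  have hgaux := convPow_aux g C hgcont hgb
  have hfcc : ∀ k, ContinuousOn (convPow f k) (Ici 0) := fun k => (hfaux k).1
  have hfcb : ∀ k : ℕ, ∀ x ∈ Ici (0:ℝ),
      convPow f k x ∈ Icc (0:ℝ) (C ^ (k+1) * x ^ k / (k.factorial : ℝ)) :=
    fun k => (hfaux k).2
  have hgcc : ∀ k, ContinuousOn (convPow g k) (Ici 0) := fun k => (hgaux k).1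
  have hgcb : ∀ k : ℕ, ∀ x ∈ Ici (0:ℝ),
      convPow g k x ∈ Icc (0:ℝ) (C ^ (k+1) * x ^ k / (k.factorial : ℝ)) :=
    fun k => (hgaux k).2
  obtain ⟨c, hcdef⟩ : ∃ t : ℝ, t = q + ψ p := ⟨_, rfl⟩
  obtain ⟨B, hBdef⟩ : ∃ t : ℝ, t = (|c| + |q|) * C := ⟨_, rfl⟩
  have hBf : |c| * C ≤ B := by
    rw [hBdef]
    nlinarith [abs_nonneg q, hCpos.le]
  have hBg : |q| * C ≤ B := by
    rw [hBdef]
    nlinarith [abs_nonneg c, hCpos.le]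
  obtain ⟨Λ₀, hΛ₀⟩ := Filter.eventually_atTop.mp
    (hψ.eventually (eventually_ge_atTop (|c| + |q| + |ψ p| + 1)))
  obtain ⟨l₁, hl₁def⟩ : ∃ t : ℝ, t = max (max (Λ₀ - a) 1) (B + 1) := ⟨_, rfl⟩
  have hmain : ∀ l : ℝ, l₁ ≤ l →
      (∫ x in Ioi (0:ℝ), Real.exp (-l * x) *
        ((∑' k : ℕ, c ^ k * convPow f k x) - ∑' k : ℕ, q ^ k * convPow g k x)) = 0 := by
    intro l hl
    rw [hl₁def] at hl
    have hl1 : (1:ℝ) ≤ l := le_trans (le_trans (le_max_right _ _) (le_max_left _ _)) hl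
    have hlB : B < l := by
      have := le_trans (le_max_right _ _) hl
      linarith
    have hlΛ₀ : Λ₀ ≤ l + a := by
      have := le_trans (le_trans (le_max_left _ _) (le_max_left _ _)) hl
      linarith
    have hlaΛ : Λ < l + a := by rw [ha]; linarith
    have hlapΛ : Λ < l + (a - p) := by rw [ha]; linarith
    have hfl : (fun x => Real.exp (-l * x) * f x) = fun x => Real.exp (-(l + a) * x) * W x := by
      funext x
      rw [hf]
      simp only
      rw [← mul_assoc, ← Real.exp_add, show -l * x + -a * x = -(l + a) * x by ring]
    have hgl : (fun x => Real.exp (-l * x) * g x)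
        = fun x => Real.exp (-(l + (a - p)) * x) * Wp x := by
      funext x
      rw [hg]
      simp only
      rw [← mul_assoc, ← Real.exp_add, show -l * x + -(a - p) * x = -(l + (a - p)) * x by ring]
    obtain ⟨hWi2, hWv2⟩ := hlapW (l + a) hlaΛ
    obtain ⟨hWpi2, hWpv2⟩ := hlapWp (l + (a - p)) hlapΛ
    rw [show l + (a - p) + p = l + a by ring] at hWpv2
    have hfint : IntegrableOn (fun x => Real.exp (-l * x) * f x) (Ioi 0) := by
      rw [hfl]; exact hWi2
    have hgint : IntegrableOn (fun x => Real.exp (-l * x) * g x) (Ioi 0) := by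
      rw [hgl]; exact hWpi2
    obtain ⟨u, hu⟩ : ∃ t : ℝ, t = ψ (l + a) := ⟨_, rfl⟩
    have hPval : (∫ x in Ioi (0:ℝ), Real.exp (-l * x) * f x) = 1 / u := by
      rw [hfl, hu]; exact hWv2
    have hQval : (∫ x in Ioi (0:ℝ), Real.exp (-l * x) * g x) = 1 / (u - ψ p) := by
      rw [hgl, hu]; exact hWpv2
    have hPpos : 0 < ∫ x in Ioi (0:ℝ), Real.exp (-l * x) * f x := by
      rw [hfl]
      exact LT_pos W (l + a) (by rw [ha]; linarith) hWmono hWnn hWne hWi2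
    have hQpos : 0 < ∫ x in Ioi (0:ℝ), Real.exp (-l * x) * g x := by
      rw [hgl]
      exact LT_pos Wp (l + (a - p)) (by rw [ha]; linarith) hWpmono hWpnn hWpne hWpi2
    have hubig : |c| + |q| + |ψ p| + 1 ≤ u := by
      rw [hu]
      exact hΛ₀ (l + a) hlΛ₀
    have hupos : 0 < u := by
      have h1 : (0:ℝ) ≤ |c| + |q| + |ψ p| := by positivity
      linarith
    have hvpos : 0 < u - ψ p := by
      have h1 := le_abs_self (ψ p)
      have h2 := abs_nonneg c
      have h3 := abs_nonneg q
      linarith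
    have hP : (∫ x in Ioi (0:ℝ), Real.exp (-l * x) * f x) = u⁻¹ := by rw [hPval, one_div]
    have hQ : (∫ x in Ioi (0:ℝ), Real.exp (-l * x) * g x) = (u - ψ p)⁻¹ := by
      rw [hQval, one_div]
    have hcP : |c| * (∫ x in Ioi (0:ℝ), Real.exp (-l * x) * f x) < 1 := by
      rw [hP, ← div_eq_mul_inv, div_lt_one hupos]
      have h2 := abs_nonneg q
      have h3 := abs_nonneg (ψ p)
      linarith
    have hqQ : |q| * (∫ x in Ioi (0:ℝ), Real.exp (-l * x) * g x) < 1 := by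
      rw [hQ, ← div_eq_mul_inv, div_lt_one hvpos]
      have h1 := le_abs_self (ψ p)
      have h2 := abs_nonneg c
      linarith
    have hSfval := LT_S f C c hfcb hfcc l hfint hcP
    have hSgval := LT_S g C q hgcb hgcc l hgint hqQ
    rw [hP] at hSfval
    rw [hQ] at hSgval
    have hucpos : 0 < u - c := by
      have h1 : c ≤ |c| := le_abs_self c
      have h2 := abs_nonneg q
      have h3 := abs_nonneg (ψ p)
      linarith
    have hval1 : u⁻¹ * (1 - c * u⁻¹)⁻¹ = (u - c)⁻¹ := by
      rw [show 1 - c * u⁻¹ = (u - c) * u⁻¹ by field_simp, mul_inv, inv_inv]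
      field_simp
    have hval2 : (u - ψ p)⁻¹ * (1 - q * (u - ψ p)⁻¹)⁻¹ = (u - c)⁻¹ := by
      have hvq : u - ψ p - q = u - c := by rw [hcdef]; ring
      rw [show 1 - q * (u - ψ p)⁻¹ = (u - ψ p - q) * (u - ψ p)⁻¹ by field_simp, hvq,
        mul_inv, inv_inv]
      field_simp
    have hSfint := S_integrable f C c hfcb hfcc B l hlB hBf
    have hSgint := S_integrable g C q hgcb hgcc B l hlB hBg
    have hsplit : (fun x => Real.exp (-l * x) *
          ((∑' k : ℕ, c ^ k * convPow f k x) - ∑' k : ℕ, q ^ k * convPow g k x))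
        = fun x => (Real.exp (-l * x) * ∑' k : ℕ, c ^ k * convPow f k x)
            - Real.exp (-l * x) * ∑' k : ℕ, q ^ k * convPow g k x := by
      funext x
      ring
    rw [hsplit, integral_sub hSfint hSgint, hSfval, hSgval, hval1, hval2, sub_self]
  have hDcont : ContinuousOn
      (fun x => (∑' k : ℕ, c ^ k * convPow f k x) - ∑' k : ℕ, q ^ k * convPow g k x) (Ici 0) :=
    (S_cont f C c hfcb hfcc).sub (S_cont g C q hgcb hgcc)
  have hDbd : ∀ x ∈ Ici (0:ℝ),
      |(∑' k : ℕ, c ^ k * convPow f k x) - ∑' k : ℕ, q ^ k * convPow g k x|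
        ≤ (2 * C) * Real.exp (B * x) := by
    intro x hx
    have h1 := S_bound f C c hfcb x hx
    have h2 := S_bound g C q hgcb x hx
    have h3 : Real.exp (|c| * C * x) ≤ Real.exp (B * x) :=
      Real.exp_le_exp.mpr (mul_le_mul_of_nonneg_right hBf hx)
    have h4 : Real.exp (|q| * C * x) ≤ Real.exp (B * x) :=
      Real.exp_le_exp.mpr (mul_le_mul_of_nonneg_right hBg hx)
    calc |(∑' k : ℕ, c ^ k * convPow f k x) - ∑' k : ℕ, q ^ k * convPow g k x|
        ≤ |∑' k : ℕ, c ^ k * convPow f k x| + |∑' k : ℕ, q ^ k * convPow g k x| := by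
          rw [sub_eq_add_neg]
          refine le_trans (abs_add_le _ _) ?_
          rw [abs_neg]
      _ ≤ C * Real.exp (B * x) + C * Real.exp (B * x) := by
          have h5 := le_trans h1 (mul_le_mul_of_nonneg_left h3 hCpos.le)
          have h6 := le_trans h2 (mul_le_mul_of_nonneg_left h4 hCpos.le)
          linarith
      _ = (2 * C) * Real.exp (B * x) := by ring
  have hD0 := laplace_zero _ hDcont (2 * C) B l₁ hDbd hmain
  rw [← hcdef]
  intro x hx
  have hSfSg : (∑' k : ℕ, c ^ k * convPow f k x) = ∑' k : ℕ, q ^ k * convPow g k x :=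
    sub_eq_zero.mp (hD0 x hx)
  have hWf : W = fun y => Real.exp (a * y) * f y := by
    funext y
    rw [hf]
    simp only
    rw [← mul_assoc, ← Real.exp_add, show a * y + -a * y = 0 by ring, Real.exp_zero, one_mul]
  have hWpg : Wp = fun y => Real.exp ((a - p) * y) * g y := by
    funext y
    rw [hg]
    simp only
    rw [← mul_assoc, ← Real.exp_add, show (a - p) * y + -(a - p) * y = 0 by ring,
      Real.exp_zero, one_mul]
  have h1 : ∀ k : ℕ, convPow W k x = Real.exp (a * x) * convPow f k x := by
    intro k
    conv_lhs => rw [hWf]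
    exact convPow_tilt f a k x hx
  have h2 : ∀ k : ℕ, convPow Wp k x = Real.exp ((a - p) * x) * convPow g k x := by
    intro k
    conv_lhs => rw [hWpg]
    exact convPow_tilt g (a - p) k x hx
  calc (∑' k : ℕ, c ^ k * convPow W k x)
      = ∑' k : ℕ, Real.exp (a * x) * (c ^ k * convPow f k x) := by
        apply tsum_congr
        intro k
        rw [h1 k]
        ring
    _ = Real.exp (a * x) * ∑' k : ℕ, c ^ k * convPow f k x := tsum_mul_left
    _ = Real.exp (a * x) * ∑' k : ℕ, q ^ k * convPow g k x := by rw [hSfSg]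
    _ = Real.exp (p * x) * ∑' k : ℕ, Real.exp ((a - p) * x) * (q ^ k * convPow g k x) := by
        rw [tsum_mul_left, ← mul_assoc, ← Real.exp_add, show p * x + (a - p) * x = a * x by ring]
    _ = Real.exp (p * x) * ∑' k : ℕ, q ^ k * convPow Wp k x := by
        congr 1
        apply tsum_congr
        intro k
        rw [h2 k]
        ring
end
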